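/- arXiv:2005.09012 — 4 statements merged into one kernel-verified Lean document; each statement's English description precedes it below -/
import Mathlib

section
/- The Newell-Littlewood number N_{μ,ν,λ} vanishes if |ν ∧ λ| + |μ ∧ ν| < |ν|, where μ ∧ ν denotes the partition whose i-th part is min(μ_i, ν_i). -/
open YoungDiagram

/-- An LR (Littlewood–Richardson) filling witnessing the Littlewood–Richardson
coefficient `c^lam_{μ,ν}`: a ballot (lattice-word) semistandard filling of the skew
shape `lam/μ` with content `ν`.  The entry in row `i`, column `j` is `T i j`;
entries are `≥ 1` on the cells of `lam/μ` and `0` elsewhere. -/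
structure LRFilling (μ ν lam : YoungDiagram) : Type where
  sub : μ ≤ lam
  T : ℕ → ℕ → ℕ
  supp : ∀ i j, T i j ≠ 0 ↔ ((i, j) ∈ lam ∧ (i, j) ∉ μ)
  rows_weak : ∀ i j₁ j₂, j₁ ≤ j₂ → T i j₁ ≠ 0 → T i j₂ ≠ 0 → T i j₁ ≤ T i j₂
  cols_strict : ∀ i₁ i₂ j, i₁ < i₂ → T i₁ j ≠ 0 → T i₂ j ≠ 0 → T i₁ j < T i₂ j
  content : ∀ k : ℕ, Nat.card {p : ℕ × ℕ // T p.1 p.2 = k + 1} = ν.rowLen k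
  ballot : ∀ i j k : ℕ,
    Nat.card {p : ℕ × ℕ // (p.1 < i ∨ (p.1 = i ∧ j ≤ p.2)) ∧ T p.1 p.2 = k + 2} ≤
      Nat.card {p : ℕ × ℕ // (p.1 < i ∨ (p.1 = i ∧ j ≤ p.2)) ∧ T p.1 p.2 = k + 1}

/-- The Littlewood–Richardson coefficient `c^lam_{μ,ν}`. -/
noncomputable def lrCoeff (μ ν lam : YoungDiagram) : ℕ := Nat.card (LRFilling μ ν lam)

/-- The Newell–Littlewood number
`N_{μ,ν,lam} = Σ_{α,β,γ} c^μ_{α,β} c^ν_{α,γ} c^lam_{β,γ}`,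
realized as the cardinality of the set of triples of LR fillings over all `α,β,γ`. -/
noncomputable def NL (μ ν lam : YoungDiagram) : ℕ :=
  Nat.card (Σ α β γ : YoungDiagram,
    (LRFilling α β μ × LRFilling α γ ν × LRFilling β γ lam))


/-!
A triple of LR fillings of shapes `μ/α`, `ν/α`, `lam/β` with contents `β`, `γ`, `γ` forces
`α ⊆ μ ⊓ ν` (inner shapes lie in outer ones) and `γ ⊆ ν ⊓ lam` (the content of an LR filling
fits in its outer shape), while the filling of `ν/α` with content `γ` gives `|α| + |γ| = |ν|`.

Containment of the content is where the ballot condition enters: it bounds every entry of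
row `i` by `i + 1`, so the entries `k + 1` lie in rows `≥ k` and, being in distinct columns,
number at most `lam_k`.
-/

namespace YoungDiagram

lemma card_mono {μ ν : YoungDiagram} (h : μ ≤ ν) : μ.card ≤ ν.card :=
  Finset.card_le_card (cells_subset_iff.mpr h)

def cellsEquivSigmaRow (μ : YoungDiagram) : μ.cells ≃ Σ i, Fin (μ.rowLen i) where
  toFun c := ⟨c.1.1, c.1.2, mem_iff_lt_rowLen.mp ((mem_cells _).mp c.2)⟩
  invFun c := ⟨(c.1, c.2), (mem_cells _).mpr (mem_iff_lt_rowLen.mpr c.2.2)⟩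
  left_inv _ := rfl
  right_inv _ := rfl

end YoungDiagram

namespace LRFilling

variable {μ ν lam : YoungDiagram}

lemma mem_skew_iff (F : LRFilling μ ν lam) {p : ℕ × ℕ} :
    p ∈ lam.cells \ μ.cells ↔ F.T p.1 p.2 ≠ 0 := by
  simp [F.supp, YoungDiagram.mem_cells]

lemma finite_of_imp_ne_zero (F : LRFilling μ ν lam) {P : ℕ × ℕ → Prop}
    (hP : ∀ p, P p → F.T p.1 p.2 ≠ 0) : Finite {p // P p} :=
  Finite.of_injective
    (fun p : {p // P p} => (⟨p.1, F.mem_skew_iff.mpr (hP p.1 p.2)⟩ : ↥(lam.cells \ μ.cells)))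
    fun _ _ h => by simpa [Subtype.ext_iff] using h

lemma exists_earlier_eq_add_one (F : LRFilling μ ν lam) {i j k : ℕ} (h : F.T i j = k + 2) :
    ∃ p : ℕ × ℕ, (p.1 < i ∨ (p.1 = i ∧ j ≤ p.2)) ∧ F.T p.1 p.2 = k + 1 := by
  have := F.finite_of_imp_ne_zero
    (P := fun p => (p.1 < i ∨ (p.1 = i ∧ j ≤ p.2)) ∧ F.T p.1 p.2 = k + 2) fun _ hp => by omega
  have hpos := Nat.card_pos_iff.mpr ⟨⟨⟨(i, j), .inr ⟨rfl, le_rfl⟩, h⟩⟩, this⟩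
  obtain ⟨⟨p, hp⟩⟩ := (Nat.card_pos_iff.mp (hpos.trans_le (F.ballot i j k))).1
  exact ⟨p, hp⟩

lemma T_le_row_add_one (F : LRFilling μ ν lam) (i j : ℕ) (h : F.T i j ≠ 0) :
    F.T i j ≤ i + 1 := by
  induction i using Nat.strong_induction_on generalizing j with
  | _ i ih =>
    by_contra! hgt
    obtain ⟨k, hk⟩ : ∃ k, F.T i j = k + 2 := ⟨F.T i j - 2, by omega⟩
    obtain ⟨p, hp | ⟨rfl, hjp⟩, hpk⟩ := F.exists_earlier_eq_add_one hk
    · have := ih p.1 hp p.2 (by omega)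
      omega
    · have := F.rows_weak p.1 j p.2 hjp h (by omega)
      omega

lemma row_eq_of_T_eq (F : LRFilling μ ν lam) {i₁ i₂ j : ℕ} (h : F.T i₁ j = F.T i₂ j)
    (h₀ : F.T i₁ j ≠ 0) : i₁ = i₂ := by
  rcases lt_trichotomy i₁ i₂ with hlt | heq | hgt
  · exact absurd h (F.cols_strict i₁ i₂ j hlt h₀ (h ▸ h₀)).ne
  · exact heq
  · exact absurd h (F.cols_strict i₂ i₁ j hgt (h ▸ h₀) h₀).ne'

lemma rowLen_le (F : LRFilling μ ν lam) (k : ℕ) : ν.rowLen k ≤ lam.rowLen k := by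
  have hne {p : ℕ × ℕ} (hp : F.T p.1 p.2 = k + 1) : F.T p.1 p.2 ≠ 0 := by omega
  have hcol (p : {p : ℕ × ℕ // F.T p.1 p.2 = k + 1}) : p.1.2 < lam.rowLen k := by
    have hmem := YoungDiagram.mem_iff_lt_rowLen.mp ((F.supp _ _).mp (hne p.2)).1
    have hrow := F.T_le_row_add_one _ _ (hne p.2)
    exact hmem.trans_le (lam.rowLen_anti k _ (by omega))
  have hinj : Function.Injective fun p => (⟨p.1.2, hcol p⟩ : Fin (lam.rowLen k)) := by
    rintro ⟨⟨i₁, j⟩, h₁⟩ ⟨⟨i₂, j'⟩, h₂⟩ h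
    obtain rfl : j = j' := congrArg Fin.val h
    obtain rfl : i₁ = i₂ := F.row_eq_of_T_eq (h₁.trans h₂.symm) (hne h₁)
    rfl
  have := F.finite_of_imp_ne_zero fun _ => hne
  simpa [F.content] using Nat.card_le_card_of_injective _ hinj

lemma content_le (F : LRFilling μ ν lam) : ν ≤ lam := fun c hc =>
  YoungDiagram.mem_iff_lt_rowLen.mpr
    ((YoungDiagram.mem_iff_lt_rowLen.mp hc).trans_le (F.rowLen_le c.1))

def skewEquivSigmaFiber (F : LRFilling μ ν lam) :
    ↥(lam.cells \ μ.cells) ≃ Σ k, {p : ℕ × ℕ // F.T p.1 p.2 = k + 1} where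
  toFun p := ⟨F.T p.1.1 p.1.2 - 1, p.1, by have := F.mem_skew_iff.mp p.2; omega⟩
  invFun q := ⟨q.2.1, F.mem_skew_iff.mpr (by have := q.2.2; omega)⟩
  left_inv _ := rfl
  right_inv := by
    rintro ⟨k, p, hp⟩
    exact Sigma.subtype_ext (by simp [hp]) rfl

lemma card_skew_eq (F : LRFilling μ ν lam) : (lam.cells \ μ.cells).card = ν.card := by
  have hfiber (k : ℕ) : {p : ℕ × ℕ // F.T p.1 p.2 = k + 1} ≃ Fin (ν.rowLen k) :=
    have := F.finite_of_imp_ne_zero fun p (hp : F.T p.1 p.2 = k + 1) => by omega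
    Finite.equivFinOfCardEq (F.content k)
  rw [← Nat.card_eq_finsetCard, YoungDiagram.card, ← Nat.card_eq_finsetCard]
  exact Nat.card_congr (F.skewEquivSigmaFiber.trans
    ((Equiv.sigmaCongrRight hfiber).trans ν.cellsEquivSigmaRow.symm))

lemma card_add_card (F : LRFilling μ ν lam) : μ.card + ν.card = lam.card := by
  rw [← F.card_skew_eq, add_comm]
  exact Finset.card_sdiff_add_card_eq_card (YoungDiagram.cells_subset_iff.mpr F.sub)

end LRFilling

/-- `N_{μ,ν,lam} = 0` if `|ν ⊓ lam| + |μ ⊓ ν| < |ν|`, where `⊓` is the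
meet of Young diagrams (whose `i`-th row has length `min (μ_i, ν_i)`). -/
theorem NL_eq_zero_of_meet (μ ν lam : YoungDiagram)
    (h : (ν ⊓ lam).card + (μ ⊓ ν).card < ν.card) : NL μ ν lam = 0 := by
  refine Nat.card_eq_zero.mpr (.inl ⟨fun ⟨α, β, γ, F₁, F₂, F₃⟩ => ?_⟩)
  have hα : α.card ≤ (μ ⊓ ν).card := YoungDiagram.card_mono (le_inf F₁.sub F₂.sub)
  have hγ : γ.card ≤ (ν ⊓ lam).card :=
    YoungDiagram.card_mono (le_inf F₂.content_le F₃.content_le)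
  have := F₂.card_add_card
  omega
end

section
/- Pieri-type rule: for a partition μ and a single-row partition (p), the Newell-Littlewood number N_{μ,(p),λ} equals the number of ways to remove (|μ|+p−|λ|)/2 boxes from μ, no two in the same column, and then add (|λ|+p−|μ|)/2 boxes, no two in the same column, to obtain λ. -/
open YoungDiagram

/-- The single-row Young diagram with `p` boxes. -/
def rowDiagram (p : ℕ) : YoungDiagram :=
  YoungDiagram.ofRowLens [p] (List.pairwise_singleton _ _).sortedGE

/-- `μ/β` is a horizontal strip (no two boxes in the same column): `β ⊆ μ` and
`μ_{i+1} ≤ β_i` for all `i`. -/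
def IsHorizontalStrip (β μ : YoungDiagram) : Prop :=
  β ≤ μ ∧ ∀ i, μ.rowLen (i + 1) ≤ β.rowLen i

/-!
Only `α = (a)`, `γ = (c)` with `a + c = p` admit a filling of `(p)/α` with content `γ`, and
then every coefficient in the sum is `0` or `1`. A filling of `lam/β` with content `(c)` consists
of `1`s, so it exists exactly when `lam/β` is a horizontal strip of size `c`. In a filling of
`μ/(a)` with content `β`, column strictness and the ballot condition force row `i` to hold `i`s
followed by `i + 1`s; the contents determine the position where the `i + 1`s begin recursively from
row `0`, where it is `a`. Such a filling exists exactly when `μ/β` is a horizontal strip of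
size `a`, so the terms of `N_{μ,(p),lam}` are indexed by the `β` for which `μ/β` and `lam/β` are
horizontal strips of total size `p`.
-/

namespace YoungDiagram

theorem rowLen_le_rowLen_of_le {β μ : YoungDiagram} (h : β ≤ μ) (i : ℕ) :
    β.rowLen i ≤ μ.rowLen i :=
  le_of_forall_lt fun _ hj => mem_iff_lt_rowLen.1 (h (mem_iff_lt_rowLen.2 hj))

theorem le_of_rowLen_le {β μ : YoungDiagram} (h : ∀ i, β.rowLen i ≤ μ.rowLen i) : β ≤ μ :=
  fun ⟨i, _⟩ hc => mem_iff_lt_rowLen.2 ((mem_iff_lt_rowLen.1 hc).trans_le (h i))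

theorem card_le_card_of_le {β μ : YoungDiagram} (h : β ≤ μ) : β.card ≤ μ.card :=
  Finset.card_le_card (cells_subset_iff.2 h)

theorem rowLen_eq_zero_iff {μ : YoungDiagram} {i : ℕ} : μ.rowLen i = 0 ↔ μ.colLen 0 ≤ i := by
  rw [← not_lt, ← mem_iff_lt_colLen, mem_iff_lt_rowLen, Nat.pos_iff_ne_zero, not_not]

theorem card_eq_sum_rowLen (μ : YoungDiagram) :
    μ.card = ∑ i ∈ Finset.range (μ.colLen 0), μ.rowLen i := by
  rw [YoungDiagram.card, Finset.card_eq_sum_card_fiberwise (f := Prod.fst) fun q hq => ?_]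
  · exact Finset.sum_congr rfl fun i _ => (μ.rowLen_eq_card).symm
  rw [Finset.mem_coe, mem_cells, mem_iff_lt_colLen] at hq
  exact Finset.mem_range.2 (lt_of_lt_of_le hq (μ.colLen_anti 0 _ (Nat.zero_le _)))

def tailCard (ν : YoungDiagram) (v : ℕ) : ℕ := (ν.cells.filter (v ≤ ·.1)).card

theorem tailCard_zero (ν : YoungDiagram) : ν.tailCard 0 = ν.card := by
  simp [tailCard]

theorem tailCard_eq_rowLen_add (ν : YoungDiagram) (v : ℕ) :
    ν.tailCard v = ν.rowLen v + ν.tailCard (v + 1) := by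
  rw [tailCard, ← Finset.card_filter_add_card_filter_not (·.1 = v), Finset.filter_filter,
    Finset.filter_filter, ν.rowLen_eq_card, tailCard, row]
  congr 2 <;> ext q <;> simp only [Finset.mem_filter] <;> exact and_congr_right fun _ => by omega

theorem tailCard_le_tailCard_of_le {β μ : YoungDiagram} (h : β ≤ μ) (v : ℕ) :
    β.tailCard v ≤ μ.tailCard v :=
  Finset.card_le_card (Finset.filter_subset_filter _ (cells_subset_iff.2 h))

end YoungDiagram

theorem mem_rowDiagram {p : ℕ} {c : ℕ × ℕ} : c ∈ rowDiagram p ↔ c.1 = 0 ∧ c.2 < p := by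
  rw [rowDiagram, mem_ofRowLens]
  constructor
  · rintro ⟨h₁, h₂⟩
    obtain h : c.1 = 0 := by simpa using h₁
    simp_all
  · rintro ⟨h₁, h₂⟩
    exact ⟨by simp [h₁], by simpa [h₁] using h₂⟩

theorem rowLen_rowDiagram (p i : ℕ) : (rowDiagram p).rowLen i = if i = 0 then p else 0 :=
  eq_of_forall_lt_iff fun j => by
    rw [← mem_iff_lt_rowLen, mem_rowDiagram]
    split_ifs with h <;> simp [h]

theorem card_rowDiagram (p : ℕ) : (rowDiagram p).card = p := by
  have : (rowDiagram p).cells = {0} ×ˢ Finset.range p := by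
    ext ⟨i, j⟩
    simp [mem_rowDiagram, and_comm, eq_comm]
  simp [YoungDiagram.card, this]

theorem exists_eq_rowDiagram_of_le {μ : YoungDiagram} {p : ℕ} (h : μ ≤ rowDiagram p) :
    ∃ a, μ = rowDiagram a := by
  refine ⟨μ.rowLen 0, ?_⟩
  ext ⟨i, j⟩
  have hi : (i, j) ∈ μ → i = 0 := fun hm => (mem_rowDiagram.1 (h hm)).1
  rw [mem_cells, mem_cells, mem_rowDiagram]
  constructor
  · intro hm
    obtain rfl := hi hm
    exact ⟨rfl, mem_iff_lt_rowLen.1 hm⟩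
  · rintro ⟨rfl, hj⟩
    exact mem_iff_lt_rowLen.2 hj

theorem isHorizontalStrip_rowDiagram {c p : ℕ} (h : c ≤ p) :
    IsHorizontalStrip (rowDiagram c) (rowDiagram p) := by
  refine ⟨fun q hq => ?_, fun i => by simp [rowLen_rowDiagram]⟩
  have := mem_rowDiagram.1 hq
  exact mem_rowDiagram.2 ⟨this.1, by omega⟩

namespace IsHorizontalStrip

variable {β μ : YoungDiagram}

theorem tailCard_succ_le (h : IsHorizontalStrip β μ) (v : ℕ) :
    μ.tailCard (v + 1) ≤ β.tailCard v := by
  refine Finset.card_le_card_of_injOn (fun q => (q.1 - 1, q.2)) (fun ⟨i, j⟩ hq => ?_) ?_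
  · simp only [Finset.coe_filter, Set.mem_ofPred_eq, mem_cells, mem_iff_lt_rowLen] at hq ⊢
    have := h.2 (i - 1)
    rw [Nat.sub_add_cancel (by omega)] at this
    omega
  · rintro ⟨i₁, j₁⟩ h₁ ⟨i₂, j₂⟩ h₂ he
    simp only [Finset.coe_filter, Set.mem_ofPred_eq, Prod.mk.injEq] at h₁ h₂ he
    ext <;> simp only <;> omega

theorem tailCard_sub_le_rowLen (h : IsHorizontalStrip β μ) (v : ℕ) :
    μ.tailCard v - β.tailCard v ≤ μ.rowLen v := by
  have := h.tailCard_succ_le v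
  have := μ.tailCard_eq_rowLen_add v
  omega

theorem antitone_tailCard_sub (h : IsHorizontalStrip β μ) :
    Antitone fun v => μ.tailCard v - β.tailCard v := by
  refine antitone_nat_of_succ_le fun v => ?_
  have := μ.tailCard_eq_rowLen_add v
  have := β.tailCard_eq_rowLen_add v
  have := rowLen_le_rowLen_of_le h.1 v
  have := tailCard_le_tailCard_of_le h.1 (v + 1)
  omega

theorem rowLen_eq_tailCard_sub (h : IsHorizontalStrip β μ) (v : ℕ) :
    β.rowLen v = μ.rowLen v - (μ.tailCard v - β.tailCard v) +
      (μ.tailCard (v + 1) - β.tailCard (v + 1)) := by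
  have := μ.tailCard_eq_rowLen_add v
  have := β.tailCard_eq_rowLen_add v
  have := tailCard_le_tailCard_of_le h.1 v
  have := tailCard_le_tailCard_of_le h.1 (v + 1)
  have := h.tailCard_sub_le_rowLen v
  omega

end IsHorizontalStrip

def thresholdFilling (μ : YoungDiagram) (x : ℕ → ℕ) (i j : ℕ) : ℕ :=
  if (i, j) ∈ μ then if j < x i then i else i + 1 else 0

section ThresholdFilling

variable {μ : YoungDiagram} {x : ℕ → ℕ}

theorem thresholdFilling_eq_succ_iff (hx : ∀ v, x v ≤ μ.rowLen v) {v r j : ℕ} :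
    thresholdFilling μ x r j = v + 1 ↔
      (r = v ∧ x v ≤ j ∧ j < μ.rowLen v) ∨ (r = v + 1 ∧ j < x (v + 1)) := by
  have := hx r
  unfold thresholdFilling
  by_cases hm : j < μ.rowLen r
  · rw [if_pos (mem_iff_lt_rowLen.2 hm)]
    obtain rfl | rfl | hr : r = v ∨ r = v + 1 ∨ (r ≠ v ∧ r ≠ v + 1) := by omega
    all_goals split_ifs <;> omega
  · rw [if_neg (mt mem_iff_lt_rowLen.1 hm)]
    obtain rfl | rfl | hr : r = v ∨ r = v + 1 ∨ (r ≠ v ∧ r ≠ v + 1) := by omega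
    all_goals omega

theorem card_thresholdFilling_eq_succ (hx : ∀ v, x v ≤ μ.rowLen v) (v : ℕ) :
    Nat.card {q : ℕ × ℕ // thresholdFilling μ x q.1 q.2 = v + 1} =
      μ.rowLen v - x v + x (v + 1) := by
  rw [Nat.subtype_card
    ({v} ×ˢ Finset.Ico (x v) (μ.rowLen v) ∪ {v + 1} ×ˢ Finset.range (x (v + 1)))]
  · rw [Finset.card_union_of_disjoint, Finset.card_product, Finset.card_product]
    · simp
    · rw [Finset.disjoint_left]
      rintro ⟨r, j⟩ h₁ h₂
      simp only [Finset.mem_product, Finset.mem_singleton] at h₁ h₂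
      omega
  · rintro ⟨r, j⟩
    simp only [thresholdFilling_eq_succ_iff hx, Finset.mem_union, Finset.mem_product,
      Finset.mem_singleton, Finset.mem_Ico, Finset.mem_range]

theorem card_region_thresholdFilling_eq_succ (hx : ∀ v, x v ≤ μ.rowLen v) {v w : ℕ}
    (hvw : v ≤ w) (hwv : w ≤ v + 1) :
    Nat.card {q : ℕ × ℕ // (q.1 < v + 1 ∨ (q.1 = v + 1 ∧ x (v + 1) ≤ q.2)) ∧
      thresholdFilling μ x q.1 q.2 = w + 1} = μ.rowLen w - x w := by
  rw [Nat.subtype_card ({w} ×ˢ Finset.Ico (x w) (μ.rowLen w))]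
  · simp
  · rintro ⟨r, j⟩
    obtain rfl | rfl : w = v ∨ w = v + 1 := by omega
    all_goals simp only [thresholdFilling_eq_succ_iff hx, Finset.mem_product, Finset.mem_singleton,
      Finset.mem_Ico]
    all_goals omega

theorem ballot_thresholdFilling (hx : ∀ v, x v ≤ μ.rowLen v) (hanti : Antitone x)
    (hstrip : ∀ v, μ.rowLen (v + 1) - x (v + 1) ≤ μ.rowLen v - x v) (i j k : ℕ) :
    Nat.card {q : ℕ × ℕ // (q.1 < i ∨ (q.1 = i ∧ j ≤ q.2)) ∧
        thresholdFilling μ x q.1 q.2 = k + 2} ≤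
      Nat.card {q : ℕ × ℕ // (q.1 < i ∨ (q.1 = i ∧ j ≤ q.2)) ∧
        thresholdFilling μ x q.1 q.2 = k + 1} := by
  -- move each `k + 2` one row up onto a `k + 1`, in row `k + 1` also right by `x k - x (k + 1)`
  let g : ℕ × ℕ → ℕ × ℕ := fun q =>
    if q.1 = k + 1 then (k, q.2 + (x k - x (k + 1))) else (k + 1, q.2)
  have hxk : x (k + 1) ≤ x k := hanti (by omega)
  have hxk' : x (k + 1 + 1) ≤ x (k + 1) := hanti (by omega)
  have hstripk := hstrip k
  refine Set.ncard_le_ncard_of_injOn g ?_ ?_ ?_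
  · rintro ⟨r, c⟩ ⟨hreg, hT⟩
    rw [thresholdFilling_eq_succ_iff hx] at hT
    simp only [g]
    split_ifs with hr
    · refine ⟨by omega, (thresholdFilling_eq_succ_iff hx).2 (Or.inl ⟨rfl, by omega, by omega⟩)⟩
    · refine ⟨by omega, (thresholdFilling_eq_succ_iff hx).2 (Or.inr ⟨rfl, by omega⟩)⟩
  · rintro ⟨r₁, c₁⟩ ⟨-, h₁⟩ ⟨r₂, c₂⟩ ⟨-, h₂⟩ he
    rw [thresholdFilling_eq_succ_iff hx] at h₁ h₂
    simp only [g] at he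
    split_ifs at he <;> simp only [Prod.mk.injEq] at he <;> ext <;> simp only <;> omega
  · refine Set.Finite.subset (μ.cells.finite_toSet) fun q hq => ?_
    have := hq.2
    unfold thresholdFilling at this
    split_ifs at this with h
    · exact (mem_cells q).2 h
    · omega

end ThresholdFilling

namespace LRFilling

section General

variable {μ ν lam : YoungDiagram}

theorem ext {F G : LRFilling μ ν lam} (h : F.T = G.T) : F = G := by
  cases F; cases G; cases h; rfl

theorem finite_setOf (F : LRFilling μ ν lam) {P : ℕ × ℕ → Prop}
    (hP : ∀ q, P q → F.T q.1 q.2 ≠ 0) : {q | P q}.Finite :=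
  lam.cells.finite_toSet.subset fun q hq => (mem_cells q).2 ((F.supp q.1 q.2).1 (hP q hq)).1

theorem T_ne_succ_of_rowLen_eq_zero (F : LRFilling μ ν lam) {k : ℕ} (hk : ν.rowLen k = 0)
    (i j : ℕ) : F.T i j ≠ k + 1 := by
  intro h
  have hfin := F.finite_setOf (P := fun q => F.T q.1 q.2 = k + 1) fun q hq => by simp [hq]
  have hpos := (Set.ncard_pos hfin).2 ⟨(i, j), h⟩
  rw [← Nat.card_coe_set_eq, Set.coe_ofPred, F.content k, hk] at hpos
  exact lt_irrefl 0 hpos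

theorem card_eq_card_add_card (F : LRFilling μ ν lam) : lam.card = μ.card + ν.card := by
  have hfiber : ∀ q ∈ lam.cells \ μ.cells, F.T q.1 q.2 - 1 ∈ Finset.range (ν.colLen 0) := by
    intro q hq
    rw [Finset.mem_sdiff, mem_cells, mem_cells, ← F.supp] at hq
    by_contra hk
    rw [Finset.mem_range, not_lt, ← rowLen_eq_zero_iff] at hk
    exact F.T_ne_succ_of_rowLen_eq_zero hk q.1 q.2 (by omega)
  have hskew : (lam.cells \ μ.cells).card = ν.card := by
    rw [ν.card_eq_sum_rowLen, Finset.card_eq_sum_card_fiberwise hfiber]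
    refine Finset.sum_congr rfl fun k _ => ?_
    rw [← F.content k, Nat.subtype_card]
    intro q
    rw [Finset.mem_filter, Finset.mem_sdiff, mem_cells, mem_cells, ← F.supp]
    omega
  rw [Finset.card_sdiff_of_subset (cells_subset_iff.2 F.sub)] at hskew
  have := Finset.card_le_card (cells_subset_iff.2 F.sub)
  show lam.cells.card = μ.cells.card + ν.card
  omega

theorem T_le_T_of_le (F : LRFilling μ ν lam) {i j₁ j₂ : ℕ} (hj : j₁ ≤ j₂)
    (h : (i, j₂) ∈ lam) : F.T i j₁ ≤ F.T i j₂ := by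
  by_cases h₁ : F.T i j₁ = 0
  · omega
  have hμ := ((F.supp i j₁).1 h₁).2
  have h₂ : F.T i j₂ ≠ 0 := (F.supp i j₂).2 ⟨h, fun hm => hμ (μ.up_left_mem le_rfl hj hm)⟩
  exact F.rows_weak i j₁ j₂ hj h₁ h₂

/-- By the ballot condition an entry `m + 2` at `(i, j)` is preceded by an `m + 1`, either in an
earlier row or further right in row `i`. -/
theorem T_le_add_one (F : LRFilling μ ν lam) (i j : ℕ) : F.T i j ≤ i + 1 := by
  induction i using Nat.strong_induction_on generalizing j with
  | _ i ih =>
  by_contra! hij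
  obtain ⟨m, hm⟩ : ∃ m, F.T i j = m + 2 := ⟨F.T i j - 2, by omega⟩
  let region (k : ℕ) := {q : ℕ × ℕ // (q.1 < i ∨ (q.1 = i ∧ j ≤ q.2)) ∧ F.T q.1 q.2 = k}
  have : Finite (region (m + 2)) := (F.finite_setOf fun q hq => by omega).to_subtype
  have : Nonempty (region (m + 2)) := ⟨⟨(i, j), Or.inr ⟨rfl, le_rfl⟩, hm⟩⟩
  obtain ⟨⟨⟨r, c⟩, hrc, hT⟩⟩ :=
    (Nat.card_pos_iff.1 (Nat.card_pos.trans_le (F.ballot i j m))).1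
  dsimp only at hrc hT
  rcases hrc with hr | ⟨rfl, hc⟩
  · have := ih r hr c
    omega
  · have := F.T_le_T_of_le hc ((F.supp r c).1 (by omega)).1
    omega

end General

section RowContent

variable {β lam : YoungDiagram} {c : ℕ}

theorem T_eq_ite_of_content_row (F : LRFilling β (rowDiagram c) lam) (i j : ℕ) :
    F.T i j = if (i, j) ∈ lam ∧ (i, j) ∉ β then 1 else 0 := by
  have hle : F.T i j ≤ 1 := by
    by_contra! h
    exact F.T_ne_succ_of_rowLen_eq_zero (k := F.T i j - 2 + 1) (by simp [rowLen_rowDiagram])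
      i j (by omega)
  split_ifs with h
  · have := (F.supp i j).2 h
    omega
  · by_contra h0
    exact h ((F.supp i j).1 h0)

instance : Subsingleton (LRFilling β (rowDiagram c) lam) :=
  ⟨fun F G => ext <| funext₂ fun i j => by
    rw [F.T_eq_ite_of_content_row, G.T_eq_ite_of_content_row]⟩

theorem isHorizontalStrip_of_content_row (F : LRFilling β (rowDiagram c) lam) :
    IsHorizontalStrip β lam := by
  refine ⟨F.sub, fun i => ?_⟩
  by_contra! h
  have h₂ : (i + 1, β.rowLen i) ∈ lam := mem_iff_lt_rowLen.2 h
  have h₁ : (i, β.rowLen i) ∈ lam := lam.up_left_mem (by omega) le_rfl h₂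
  have hβ₁ : (i, β.rowLen i) ∉ β := by simp [mem_iff_lt_rowLen]
  have hβ₂ : (i + 1, β.rowLen i) ∉ β := fun hm => hβ₁ (β.up_left_mem (by omega) le_rfl hm)
  have := F.cols_strict i (i + 1) _ (by omega)
    ((F.supp _ _).2 ⟨h₁, hβ₁⟩) ((F.supp _ _).2 ⟨h₂, hβ₂⟩)
  rw [F.T_eq_ite_of_content_row, F.T_eq_ite_of_content_row, if_pos ⟨h₁, hβ₁⟩,
    if_pos ⟨h₂, hβ₂⟩] at this
  exact lt_irrefl 1 this

def ofHorizontalStrip (h : IsHorizontalStrip β lam) (hc : lam.card = β.card + c) :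
    LRFilling β (rowDiagram c) lam where
  sub := h.1
  T i j := if (i, j) ∈ lam ∧ (i, j) ∉ β then 1 else 0
  supp i j := by split_ifs with h <;> simp [h]
  rows_weak i j₁ j₂ _ h₁ h₂ := by split_ifs at h₁ h₂ ⊢ <;> omega
  cols_strict i₁ i₂ j hi h₁ h₂ := by
    have H₁ : (i₁, j) ∈ lam ∧ (i₁, j) ∉ β := by_contra fun H => h₁ (if_neg H)
    have H₂ : (i₂, j) ∈ lam ∧ (i₂, j) ∉ β := by_contra fun H => h₂ (if_neg H)
    have := mem_iff_lt_rowLen.1 (lam.up_left_mem hi le_rfl H₂.1)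
    exact absurd (mem_iff_lt_rowLen.2 (this.trans_le (h.2 i₁))) H₁.2
  content k := by
    cases k with
    | zero =>
      rw [rowLen_rowDiagram, if_pos rfl, Nat.subtype_card (lam.cells \ β.cells)
        fun q => by simp only [Finset.mem_sdiff, mem_cells]; split_ifs <;> simp [*],
        Finset.card_sdiff_of_subset (cells_subset_iff.2 h.1)]
      change lam.cells.card = β.cells.card + c at hc
      omega
    | succ k =>
      rw [rowLen_rowDiagram, if_neg k.succ_ne_zero,
        Nat.subtype_card ∅ fun q => by split_ifs <;> simp]
      rfl
  ballot i j k := by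
    rw [Nat.subtype_card ∅ fun q => by split_ifs <;> simp]
    exact Nat.zero_le _

end RowContent

section RowInner

variable {a : ℕ} {β μ : YoungDiagram}

theorem row_le_T_of_inner_row (F : LRFilling (rowDiagram a) β μ) {i j : ℕ} (h : (i, j) ∈ μ) :
    i ≤ F.T i j := by
  induction i with
  | zero => exact Nat.zero_le _
  | succ i ih =>
    have hne : F.T (i + 1) j ≠ 0 := (F.supp _ _).2 ⟨h, fun hm => by simp [mem_rowDiagram] at hm⟩
    have hi : (i, j) ∈ μ := μ.up_left_mem (Nat.le_succ i) le_rfl h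
    by_cases h0 : F.T i j = 0
    · have : (i, j) ∈ rowDiagram a := by_contra fun hn => (F.supp i j).2 ⟨hi, hn⟩ h0
      obtain rfl : i = 0 := (mem_rowDiagram.1 this).1
      omega
    · have := F.cols_strict i (i + 1) j (by omega) h0 hne
      have := ih hi
      omega

def threshold (F : LRFilling (rowDiagram a) β μ) (v : ℕ) : ℕ :=
  Nat.find (⟨μ.rowLen v, Or.inl le_rfl⟩ : ∃ j, μ.rowLen v ≤ j ∨ v < F.T v j)

theorem threshold_le_rowLen (F : LRFilling (rowDiagram a) β μ) (v : ℕ) :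
    F.threshold v ≤ μ.rowLen v :=
  Nat.find_min' _ (Or.inl le_rfl)

theorem T_le_iff_lt_threshold (F : LRFilling (rowDiagram a) β μ) {v j : ℕ} (hj : j < μ.rowLen v) :
    F.T v j ≤ v ↔ j < F.threshold v := by
  rw [threshold, Nat.lt_find_iff]
  constructor
  · intro hT m hm
    have := F.T_le_T_of_le hm (mem_iff_lt_rowLen.2 hj)
    omega
  · intro h
    have := h j le_rfl
    omega

theorem T_eq_thresholdFilling (F : LRFilling (rowDiagram a) β μ) :
    F.T = thresholdFilling μ F.threshold := by
  funext i j
  unfold thresholdFilling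
  split_ifs with hμ hj
  · have := (F.T_le_iff_lt_threshold (mem_iff_lt_rowLen.1 hμ)).2 hj
    have := F.row_le_T_of_inner_row hμ
    omega
  · have := (F.T_le_iff_lt_threshold (mem_iff_lt_rowLen.1 hμ)).not.2 hj
    have := F.T_le_add_one i j
    omega
  · by_contra h
    exact hμ ((F.supp i j).1 h).1

theorem threshold_zero (F : LRFilling (rowDiagram a) β μ) : F.threshold 0 = a := by
  have ha : a ≤ μ.rowLen 0 := by simpa [rowLen_rowDiagram] using rowLen_le_rowLen_of_le F.sub 0
  refine eq_of_forall_lt_iff fun j => ?_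
  by_cases hj : j < μ.rowLen 0
  · rw [← F.T_le_iff_lt_threshold hj, Nat.le_zero, ← not_iff_not, ← ne_eq, F.supp, mem_rowDiagram]
    simp [mem_iff_lt_rowLen, hj]
  · have := F.threshold_le_rowLen 0
    omega

theorem rowLen_eq_rowLen_sub_threshold_add (F : LRFilling (rowDiagram a) β μ) (v : ℕ) :
    β.rowLen v = μ.rowLen v - F.threshold v + F.threshold (v + 1) := by
  rw [← F.content v, F.T_eq_thresholdFilling, card_thresholdFilling_eq_succ F.threshold_le_rowLen]

instance : Subsingleton (LRFilling (rowDiagram a) β μ) := by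
  refine ⟨fun F G => ext ?_⟩
  have hthr : ∀ v, F.threshold v = G.threshold v := by
    intro v
    induction v with
    | zero => rw [F.threshold_zero, G.threshold_zero]
    | succ v ih =>
      have := F.rowLen_eq_rowLen_sub_threshold_add v
      have := G.rowLen_eq_rowLen_sub_threshold_add v
      have := F.threshold_le_rowLen v
      have := G.threshold_le_rowLen v
      omega
  rw [F.T_eq_thresholdFilling, G.T_eq_thresholdFilling, funext hthr]

theorem isHorizontalStrip_of_inner_row (F : LRFilling (rowDiagram a) β μ) :
    IsHorizontalStrip β μ := by
  have hx := F.threshold_le_rowLen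
  have hT := F.T_eq_thresholdFilling
  have hanti (v : ℕ) : F.threshold (v + 1) ≤ F.threshold v := by
    by_contra! h
    have := μ.rowLen_anti v (v + 1) (Nat.le_succ v)
    have h₁ : F.T v (F.threshold v) = v + 1 := by
      rw [hT, thresholdFilling_eq_succ_iff hx]
      exact Or.inl ⟨rfl, le_rfl, by have := hx (v + 1); omega⟩
    have h₂ : F.T (v + 1) (F.threshold v) = v + 1 := by
      rw [hT, thresholdFilling_eq_succ_iff hx]
      exact Or.inr ⟨rfl, h⟩
    have := F.cols_strict v (v + 1) (F.threshold v) (Nat.lt_succ_self v) (by omega) (by omega)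
    omega
  have hballot (v : ℕ) : μ.rowLen (v + 1) - F.threshold (v + 1) ≤ μ.rowLen v - F.threshold v := by
    have := F.ballot (v + 1) (F.threshold (v + 1)) v
    rwa [hT, card_region_thresholdFilling_eq_succ hx (Nat.le_succ v) le_rfl,
      card_region_thresholdFilling_eq_succ hx le_rfl (Nat.le_succ v)] at this
  refine ⟨le_of_rowLen_le fun v => ?_, fun v => ?_⟩
  · rw [F.rowLen_eq_rowLen_sub_threshold_add v]
    have := hanti v
    have := hx v
    omega
  · rw [F.rowLen_eq_rowLen_sub_threshold_add v]
    have := hballot v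
    have := hx v
    have := hx (v + 1)
    omega

/-- The thresholds solve `x (v + 1) = x v - (μ.rowLen v - β.rowLen v)`, `x 0 = a`: `x v` is the
number of cells of `μ/β` in rows `v, v + 1, …`. -/
def innerRowOfHorizontalStrip (h : IsHorizontalStrip β μ) (hc : μ.card = β.card + a) :
    LRFilling (rowDiagram a) β μ where
  sub := by
    have := h.tailCard_sub_le_rowLen 0
    rw [μ.tailCard_zero, β.tailCard_zero] at this
    refine le_of_rowLen_le fun i => ?_
    rw [rowLen_rowDiagram]
    split_ifs with hi
    · subst hi
      omega
    · exact Nat.zero_le _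
  T := thresholdFilling μ fun v => μ.tailCard v - β.tailCard v
  supp i j := by
    have h0 : μ.tailCard 0 - β.tailCard 0 = a := by
      rw [μ.tailCard_zero, β.tailCard_zero]
      omega
    unfold thresholdFilling
    rw [mem_rowDiagram]
    rcases i with _ | i <;> split_ifs <;> simp_all
  rows_weak i j₁ j₂ hj h₁ h₂ := by
    unfold thresholdFilling at *
    split_ifs at * <;> omega
  cols_strict i₁ i₂ j hi h₁ h₂ := by
    have : _ ≤ _ := h.antitone_tailCard_sub hi.le
    simp only [thresholdFilling] at *
    split_ifs at * <;> omega
  content v := by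
    rw [card_thresholdFilling_eq_succ h.tailCard_sub_le_rowLen, h.rowLen_eq_tailCard_sub]
  ballot := ballot_thresholdFilling h.tailCard_sub_le_rowLen h.antitone_tailCard_sub fun v => by
    have hv := h.2 v
    rw [h.rowLen_eq_tailCard_sub] at hv
    have := h.tailCard_sub_le_rowLen v
    have := h.tailCard_sub_le_rowLen (v + 1)
    omega

end RowInner

theorem exists_eq_rowDiagram_of_rowDiagram {α γ : YoungDiagram} {p : ℕ}
    (F : LRFilling α γ (rowDiagram p)) :
    ∃ a c, α = rowDiagram a ∧ γ = rowDiagram c ∧ p = a + c := by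
  obtain ⟨a, rfl⟩ := exists_eq_rowDiagram_of_le F.sub
  obtain ⟨c, rfl⟩ := exists_eq_rowDiagram_of_le F.isHorizontalStrip_of_inner_row.1
  have := F.card_eq_card_add_card
  simp only [card_rowDiagram] at this
  exact ⟨a, c, rfl, rfl, this⟩

end LRFilling

open LRFilling in
/-- Pieri-type rule: `N_{μ,(p),lam}` equals the number of ways to remove
`(|μ|+p-|lam|)/2` boxes from `μ` (no two in the same column) and then add
`(|lam|+p-|μ|)/2` boxes (no two in the same column) to obtain `lam`; i.e. the number of
intermediate partitions `β` with `μ/β` and `lam/β` horizontal strips of those sizes. -/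
theorem NL_pieri (μ lam : YoungDiagram) (p : ℕ) :
    NL μ (rowDiagram p) lam =
      Nat.card {β : YoungDiagram //
        IsHorizontalStrip β μ ∧ IsHorizontalStrip β lam ∧
        2 * ((μ.card : ℤ) - (β.card : ℤ)) = (μ.card : ℤ) + (p : ℤ) - (lam.card : ℤ) ∧
        2 * ((lam.card : ℤ) - (β.card : ℤ)) = (lam.card : ℤ) + (p : ℤ) - (μ.card : ℤ)} := by
  refine Nat.card_congr (Equiv.ofBijective (fun x => ⟨x.2.1, ?_⟩) ⟨?_, ?_⟩)
  · obtain ⟨α, β, γ, F₁, F₂, F₃⟩ := x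
    obtain ⟨a, c, rfl, rfl, hp⟩ := F₂.exists_eq_rowDiagram_of_rowDiagram
    have hμ := F₁.card_eq_card_add_card
    have hlam := F₃.card_eq_card_add_card
    rw [card_rowDiagram] at hμ hlam
    dsimp only
    exact ⟨F₁.isHorizontalStrip_of_inner_row, F₃.isHorizontalStrip_of_content_row,
      by omega, by omega⟩
  · rintro ⟨α₁, β, γ₁, F₁, F₂, F₃⟩ ⟨α₂, β', γ₂, G₁, G₂, G₃⟩ he
    obtain rfl : β = β' := congrArg Subtype.val he
    obtain ⟨a₁, c₁, rfl, rfl, hp₁⟩ := F₂.exists_eq_rowDiagram_of_rowDiagram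
    obtain ⟨a₂, c₂, rfl, rfl, hp₂⟩ := G₂.exists_eq_rowDiagram_of_rowDiagram
    have h₁ := F₁.card_eq_card_add_card
    have h₂ := G₁.card_eq_card_add_card
    rw [card_rowDiagram] at h₁ h₂
    obtain rfl : a₁ = a₂ := by omega
    obtain rfl : c₁ = c₂ := by omega
    rw [Subsingleton.elim F₁ G₁, Subsingleton.elim F₂ G₂, Subsingleton.elim F₃ G₃]
  · rintro ⟨β, hμ, hlam, hcard, -⟩
    have := card_le_card_of_le hμ.1
    have := card_le_card_of_le hlam.1
    refine ⟨⟨rowDiagram (μ.card - β.card), β, rowDiagram (lam.card - β.card),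
      innerRowOfHorizontalStrip hμ (by omega),
      innerRowOfHorizontalStrip (isHorizontalStrip_rowDiagram (by omega)) ?_,
      ofHorizontalStrip hlam (by omega)⟩, rfl⟩
    rw [card_rowDiagram, card_rowDiagram]
    omega
end

section
/- If c^μ_{α,β} > 0 and α ⊂ α⁺ ⊆ μ with |α⁺/α| = 1 (α⁺ is α with one box added), then there exists β⁻ ⊂ β with |β/β⁻| = 1 such that c^μ_{α⁺,β⁻} > 0. -/
open YoungDiagram

namespace LR11

def S (f g : ℕ → ℕ) (i : ℕ) : ℕ := ∑ x ∈ Finset.range i, (f x - g x)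

lemma S_succ (f g : ℕ → ℕ) (i : ℕ) : S f g (i+1) = S f g i + (f i - g i) :=
  Finset.sum_range_succ _ i

lemma S_mono (f g : ℕ → ℕ) {i i' : ℕ} (h : i ≤ i') : S f g i ≤ S f g i' :=
  Finset.sum_le_sum_of_subset (Finset.range_subset_range.2 h)

lemma S_indicator_left (f g : ℕ → ℕ) (i₀ : ℕ) (h : ∀ x, g x ≤ f x) (i : ℕ) :
    S (fun x => f x + if x = i₀ then 1 else 0) g i = S f g i + (if i₀ < i then 1 else 0) := by
  induction i with
  | zero => simp [S]
  | succ i ih =>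
    rw [S_succ, S_succ, ih]
    have := h i
    split_ifs <;> omega

lemma S_indicator_right (f g : ℕ → ℕ) (i₀ : ℕ)
    (h : ∀ x, (g x + if x = i₀ then 1 else 0) ≤ f x) (i : ℕ) :
    S f (fun x => g x + if x = i₀ then 1 else 0) i + (if i₀ < i then 1 else 0) = S f g i := by
  induction i with
  | zero => simp [S]
  | succ i ih =>
    rw [S_succ, S_succ]
    have h1 := h i
    have h2 := h i₀
    split_ifs at * <;> omega

lemma S_congr (f g f' g' : ℕ → ℕ) (h : ∀ x, f x - g x = f' x - g' x) (i : ℕ) :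
    S f g i = S f' g' i :=
  Finset.sum_congr rfl fun x _ => h x

/-- The conclusion of the cascade construction. -/
def CoreOut (R n : ℕ) (η : ℕ → ℕ) (G : ℕ → ℕ → ℕ) (F : ℕ → ℕ → ℕ) (w : ℕ) : Prop :=
    (∀ j, Antitone (F j)) ∧
    (∀ i, η i ≤ F 0 i) ∧ (∀ j i, F j i ≤ F (j+1) i) ∧
    (∀ i, F 0 (i+1) ≤ η i) ∧ (∀ j i, F (j+1) (i+1) ≤ F j i) ∧
    (∀ j i, n ≤ j → F j i = G n i) ∧
    (∀ j i, R ≤ i → F j i = 0) ∧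
    (∀ i, S (F 1) (F 0) (i+1) ≤ S (F 0) η i) ∧
    (∀ j i, S (F (j+2)) (F (j+1)) (i+1) ≤ S (F (j+1)) (F j) i) ∧
    (S (F 0) η R + (if w = 0 then 1 else 0) = S (G 0) η R + 1) ∧
    (∀ j, S (G (j+1)) (G j) R = S (F (j+1)) (F j) R + (if j + 1 = w then 1 else 0)) ∧
    (F 0 = G 0 ∨ ∃ i₀, (∀ i, F 0 i = G 0 i + if i = i₀ then 1 else 0) ∧
        S (G 0) η i₀ < S (G 1) (G 0) (i₀+1))

lemma core (R : ℕ) (n : ℕ) : ∀ (η : ℕ → ℕ) (G : ℕ → ℕ → ℕ),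
    (∀ j, Antitone (G j)) → Antitone η →
    (∀ i, η i ≤ G 0 i) → (∀ j i, G j i ≤ G (j+1) i) →
    (∀ i, G 0 (i+1) ≤ η i) → (∀ j i, G (j+1) (i+1) ≤ G j i) →
    (∀ j i, n ≤ j → G j i = G n i) →
    (∀ i, R ≤ i → η i = 0) →
    (∀ j i, R ≤ i → G j i = 0) →
    (∀ i, S (G 1) (G 0) (i+1) ≤ S (G 0) η i + 1) →
    (∀ j i, S (G (j+2)) (G (j+1)) (i+1) ≤ S (G (j+1)) (G j) i) →
    ∃ (F : ℕ → ℕ → ℕ) (w : ℕ), CoreOut R n η G F w := by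
  induction n with
  | zero =>
    intro η G hGanti hηanti hηle hchain hintη hint hstab hηz hGz hbot hup
    refine ⟨G, 0, hGanti, hηle, hchain, hintη, hint, hstab, hGz, ?_, hup, by simp, ?_, Or.inl rfl⟩
    · intro i
      have h0 : S (G 1) (G 0) (i+1) = 0 := by
        refine Finset.sum_eq_zero fun x _ => ?_
        rw [hstab 1 x (by omega)]; omega
      omega
    · intro j; simp
  | succ n IH =>
    intro η G hGanti hηanti hηle hchain hintη hint hstab hηz hGz hbot hup
    classical
    by_cases hV : ∀ i, S (G 1) (G 0) (i+1) ≤ S (G 0) η i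
    · exact ⟨G, 0, hGanti, hηle, hchain, hintη, hint, hstab, hGz, hV, hup, by simp,
        fun j => by simp, Or.inl rfl⟩
    · push_neg at hV
      have hchain0 : ∀ i, G 0 i ≤ G 1 i := fun i => by simpa using hchain 0 i
      have hint0 : ∀ i, G 1 (i+1) ≤ G 0 i := fun i => by simpa using hint 0 i
      have hup0 : ∀ i, S (G 2) (G 1) (i+1) ≤ S (G 1) (G 0) i := fun i => by simpa using hup 0 i
      obtain ⟨is, hspec, hmin⟩ : ∃ is, S (G 0) η is < S (G 1) (G 0) (is+1) ∧
          ∀ m, m < is → S (G 1) (G 0) (m+1) ≤ S (G 0) η m :=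
        ⟨Nat.find hV, Nat.find_spec hV, fun m hm => not_lt.mp (Nat.find_min hV hm)⟩
      -- f1 : the strip at level 1 has a box in row is
      have f1 : G 0 is < G 1 is := by
        rcases Nat.eq_zero_or_pos is with h0 | hpos
        · subst h0
          have e1 := S_succ (G 1) (G 0) 0
          have e2 : S (G 1) (G 0) 0 = 0 := Finset.sum_range_zero _
          have e3 : S (G 0) η 0 = 0 := Finset.sum_range_zero _
          omega
        · obtain ⟨m, rfl⟩ : ∃ m, is = m + 1 := ⟨is - 1, by omega⟩
          have h1 := hmin m (by omega)
          have h3 := S_mono (G 0) η (show m ≤ m + 1 by omega)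
          have h4 := S_succ (G 1) (G 0) (m+1)
          have h5 := hchain0 (m+1)
          omega
      have f2 : is < R := by
        by_contra hc
        have h1 := hGz 0 is (by omega)
        have h2 := hGz 1 is (by omega)
        omega
      -- the new level-0 partition
      set η' : ℕ → ℕ := fun i => G 0 i + if i = is then 1 else 0 with hη'
      have evs : η' is = G 0 is + 1 := by simp [hη']
      have ev : ∀ x, x ≠ is → η' x = G 0 x := fun x hx => by simp [hη', hx]
      have hη'le : ∀ i, η' i ≤ G 1 i := by
        intro i
        rcases eq_or_ne i is with rfl | h
        · rw [evs]; omega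
        · rw [ev i h]; exact hchain0 i
      have key1 : ∀ i, i + 1 = is → G 0 is + 1 ≤ G 0 i := by
        intro i hi
        have h := hint0 i
        rw [hi] at h
        omega
      have hη'anti : Antitone η' := by
        apply antitone_nat_of_succ_le
        intro i
        rcases eq_or_ne (i+1) is with h1 | h1
        · rw [h1, evs, ev i (by omega)]
          exact key1 i h1
        · rw [ev _ h1]
          rcases eq_or_ne i is with h2 | h2
          · rw [h2, evs]
            have := hGanti 0 (show is ≤ is + 1 by omega)
            omega
          · rw [ev _ h2]
            exact hGanti 0 (show i ≤ i + 1 by omega)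
      -- C2b : interlacing of G 1 below η'
      have f5 : ∀ i, G 1 (i+1) ≤ η' i := by
        intro i
        rcases eq_or_ne i is with rfl | h
        · rw [evs]
          have h1 := hbot (i+1)
          have h2 := S_succ (G 0) η i
          have h3 := S_succ (G 1) (G 0) (i+1)
          have h4 := hspec
          have h5 := hintη i
          have h6 := hηle i
          have h7 := hchain0 (i+1)
          omega
        · rw [ev _ h]
          exact hint0 i
      have hE2 : ∀ m, S (G 1) η' m + (if is < m then 1 else 0) = S (G 1) (G 0) m := by
        intro m
        rw [hη']
        refine S_indicator_right (G 1) (G 0) is ?_ m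
        intro x
        rcases eq_or_ne x is with rfl | h
        · simp; omega
        · simp [h]; exact hchain0 x
      have hE1 : ∀ m, S η' η m = S (G 0) η m + (if is < m then 1 else 0) := by
        intro m
        rw [hη']
        exact S_indicator_left (G 0) η is hηle m
      obtain ⟨F', w', hF'anti, hO1, hO2, hO4, hO5, hO6r, hFzr, hO7r, hO8r, hO9ar, hO9br, hO10r⟩ :=
        IH η' (fun j => G (j+1)) (fun j => hGanti (j+1)) hη'anti hη'le
          (fun j i => hchain (j+1) i) f5 (fun j i => hint (j+1) i)
          (fun j i hj => hstab (j+1) i (by omega))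
          (fun i hi => by
            rw [ev i (by omega), hGz 0 i hi])
          (fun j i hi => hGz (j+1) i hi)
          (fun i => by
            show S (G 2) (G 1) (i+1) ≤ S (G 1) η' i + 1
            have h1 := hup0 i
            have h2 := hE2 i
            by_cases hc : is < i
            · rw [if_pos hc] at h2; omega
            · rw [if_neg hc] at h2; omega)
          (fun j i => hup (j+1) i)
      -- clean up beta redexes in the recursive outputs
      have hO6' : ∀ j i, n ≤ j → F' j i = G (n+1) i := fun j i hj => hO6r j i hj
      have hFz' : ∀ j i, R ≤ i → F' j i = 0 := hFzr
      have hO7 : ∀ i, S (F' 1) (F' 0) (i+1) ≤ S (F' 0) η' i := hO7r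
      have hO8 : ∀ j i, S (F' (j+2)) (F' (j+1)) (i+1) ≤ S (F' (j+1)) (F' j) i := hO8r
      have hO9a' : S (F' 0) η' R + (if w' = 0 then 1 else 0) = S (G 1) η' R + 1 := hO9ar
      have hO9b' : ∀ j, S (G (j+2)) (G (j+1)) R
          = S (F' (j+1)) (F' j) R + (if j + 1 = w' then 1 else 0) := fun j => hO9br j
      have hO10' : F' 0 = G 1 ∨ ∃ i₀, (∀ i, F' 0 i = G 1 i + if i = i₀ then 1 else 0) ∧
          S (G 1) η' i₀ < S (G 2) (G 1) (i₀+1) := hO10r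
      refine ⟨fun j => Nat.rec η' (fun j' _ => F' j') j, w' + 1, ?_, ?_, ?_, ?_, ?_, ?_, ?_, ?_,
        ?_, ?_, ?_, ?_⟩
      · intro j
        cases j with
        | zero => exact hη'anti
        | succ j => exact hF'anti j
      · intro i
        exact le_trans (hηle i) (Nat.le_add_right _ _)
      · intro j i
        cases j with
        | zero => exact hO1 i
        | succ j => exact hO2 j i
      · -- C3 : interlacing of the new level 0 below η
        intro i
        show η' (i+1) ≤ η i
        rcases eq_or_ne (i+1) is with h1 | h1
        · rw [h1, evs]
          by_contra hcon
          push_neg at hcon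
          have eq1 : G 0 (i+1) = G 0 is := by rw [h1]
          have h2 := hintη i
          have h3 := hmin i (by omega)
          have h4 := S_succ (G 0) η i
          have h5 := S_succ (G 1) (G 0) (i+1)
          have h6 : S (G 0) η (i+1) < S (G 1) (G 0) (i+1+1) := by rw [h1]; exact hspec
          have h7 := hint0 i
          have h8 := hGanti 0 (show i ≤ i + 1 by omega)
          have h9 := hηle i
          omega
        · rw [ev _ h1]
          exact hintη i
      · intro j i
        cases j with
        | zero => exact hO4 i
        | succ j => exact hO5 j i
      · intro j i hj
        cases j with
        | zero => omega
        | succ j => exact hO6' j i (by omega)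
      · intro j i hi
        cases j with
        | zero =>
          show η' i = 0
          rw [ev i (by omega), hGz 0 i hi]
        | succ j => exact hFz' j i hi
      · -- O7 : the new bottom ballot inequality
        intro i
        show S (F' 0) η' (i+1) ≤ S η' η i
        have E1 : S η' η i = S (G 0) η i + (if is < i then 1 else 0) := hE1 i
        have hge : S (G 0) η i ≤ S η' η i := by rw [E1]; split_ifs <;> omega
        have E2' := hE2 (i+1)
        rcases hO10' with hid | ⟨i₁, hbox, hviol⟩
        · rw [hid]
          by_cases hi : i < is
          · have hmm := hmin i hi
            rw [if_neg (by omega)] at E2'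
            omega
          · have hb := hbot i
            rw [if_pos (by omega)] at E2'
            omega
        · have hi₁ : is < i₁ := by
            by_contra hc
            push_neg at hc
            have hu := hup0 i₁
            have E2i := hE2 i₁
            rw [if_neg (by omega)] at E2i
            omega
          have E3 : S (F' 0) η' (i+1) = S (G 1) η' (i+1) + (if i₁ < i+1 then 1 else 0) := by
            rw [S_congr (F' 0) η' (fun x => G 1 x + if x = i₁ then 1 else 0) η'
              (fun x => by rw [hbox x]) (i+1)]
            exact S_indicator_left (G 1) η' i₁ hη'le (i+1)
          by_cases h2 : i₁ < i + 1
          · rw [if_pos h2] at E3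
            rw [if_pos (by omega)] at E2'
            rw [if_pos (by omega)] at E1
            have hb := hbot i
            omega
          · rw [if_neg h2] at E3
            by_cases hi : i < is
            · have hmm := hmin i hi
              rw [if_neg (by omega)] at E2'
              omega
            · have hb := hbot i
              rw [if_pos (by omega)] at E2'
              omega
      · intro j i
        cases j with
        | zero => exact hO7 i
        | succ j => exact hO8 j i
      · -- O9a
        show S η' η R + (if w' + 1 = 0 then 1 else 0) = S (G 0) η R + 1
        rw [if_neg (by omega)]
        have E1 := hE1 R
        rw [if_pos f2] at E1
        omega
      · -- O9b
        intro j
        cases j with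
        | zero =>
          show S (G 1) (G 0) R = S (F' 0) η' R + (if 0 + 1 = w' + 1 then 1 else 0)
          have E2R := hE2 R
          rw [if_pos f2] at E2R
          by_cases hw : w' = 0
          · rw [if_pos (by omega)]
            rw [if_pos hw] at hO9a'
            omega
          · rw [if_neg (by omega)]
            rw [if_neg hw] at hO9a'
            omega
        | succ j =>
          show S (G (j+2)) (G (j+1)) R = S (F' (j+1)) (F' j) R + (if j+1+1 = w'+1 then 1 else 0)
          have h := hO9b' j
          by_cases hw : j + 1 = w'
          · rw [if_pos (by omega)]
            rw [if_pos hw] at h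
            omega
          · rw [if_neg (by omega)]
            rw [if_neg hw] at h
            omega
      · -- O10
        right
        exact ⟨is, fun i => rfl, hspec⟩


def D (f g : ℕ → ℕ) (i : ℕ) : Finset (ℕ × ℕ) :=
  (Finset.range i).biUnion (fun x => {x} ×ˢ Finset.Ico (g x) (f x))

lemma mem_D {f g : ℕ → ℕ} {i : ℕ} {p : ℕ × ℕ} :
    p ∈ D f g i ↔ p.1 < i ∧ g p.1 ≤ p.2 ∧ p.2 < f p.1 := by
  rcases p with ⟨a, b⟩
  simp only [D, Finset.mem_biUnion, Finset.mem_range, Finset.mem_product, Finset.mem_singleton,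
    Finset.mem_Ico]
  constructor
  · rintro ⟨x, hx, rfl, h⟩; exact ⟨hx, h⟩
  · rintro ⟨hx, h⟩; exact ⟨a, hx, rfl, h⟩

lemma card_D (f g : ℕ → ℕ) (i : ℕ) : (D f g i).card = S f g i := by
  rw [D, Finset.card_biUnion]
  · refine Finset.sum_congr rfl fun x _ => ?_
    rw [Finset.card_product, Finset.card_singleton, Nat.card_Ico, one_mul]
  · intro a _ b _ hab
    simp only [Finset.disjoint_left]
    intro p hp hq
    rw [Finset.mem_product, Finset.mem_singleton] at hp hq
    exact hab (hp.1.symm.trans hq.1)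

lemma natCard_of_finset (P : ℕ × ℕ → Prop) (F : Finset (ℕ × ℕ)) (h : ∀ p, P p ↔ p ∈ F) :
    Nat.card {p : ℕ × ℕ // P p} = F.card := by
  rw [Nat.card_congr (Equiv.subtypeEquivRight h)]
  exact Nat.card_eq_finsetCard F

lemma finite_of_finset (P : ℕ × ℕ → Prop) (F : Finset (ℕ × ℕ)) (h : ∀ p, P p → p ∈ F) :
    Finite {p : ℕ × ℕ // P p} := by
  apply Finite.of_injective
    (fun q : {p : ℕ × ℕ // P p} => (⟨q.1, h q.1 q.2⟩ : {p : ℕ × ℕ // p ∈ F}))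
  intro a b hab
  simpa [Subtype.ext_iff] using hab

/-- rows at index `≥ colLen 0` are empty -/
lemma rowLen_zero_of_ge {μ : YoungDiagram} {i : ℕ} (h : μ.colLen 0 ≤ i) : μ.rowLen i = 0 := by
  by_contra hc
  have h1 : (i, 0) ∈ μ := by
    rw [YoungDiagram.mem_iff_lt_rowLen]; omega
  rw [YoungDiagram.mem_iff_lt_colLen] at h1
  omega

lemma card_eq_sum_rowLens (μ : YoungDiagram) (n : ℕ) (hn : μ.colLen 0 ≤ n) :
    μ.card = ∑ i ∈ Finset.range n, μ.rowLen i := by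
  have hcells : μ.cells = (Finset.range n).biUnion (fun i => μ.row i) := by
    ext p
    simp only [Finset.mem_biUnion, Finset.mem_range, YoungDiagram.mem_row_iff]
    constructor
    · intro hp
      refine ⟨p.1, ?_, ?_, rfl⟩
      · have h2 : (p.1, 0) ∈ μ := μ.up_left_mem le_rfl (Nat.zero_le _) (by
          rw [YoungDiagram.mem_cells] at hp; exact (show (p.1, p.2) ∈ μ from hp))
        rw [YoungDiagram.mem_iff_lt_colLen] at h2
        omega
      · rwa [YoungDiagram.mem_cells] at hp
    · rintro ⟨i, _, hp, rfl⟩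
      rwa [YoungDiagram.mem_cells]
  rw [YoungDiagram.card, hcells, Finset.card_biUnion]
  · exact Finset.sum_congr rfl fun i _ => (μ.rowLen_eq_card).symm
  · intro a _ b _ hab
    simp only [Finset.disjoint_left, YoungDiagram.mem_row_iff]
    rintro p ⟨_, rfl⟩ ⟨_, h2⟩
    exact hab h2

private lemma mem_rowsFinset {f : ℕ → ℕ} {R : ℕ} (hR : ∀ i, R ≤ i → f i = 0) (p : ℕ × ℕ) :
    p ∈ (Finset.range R).biUnion (fun x => {x} ×ˢ Finset.range (f x)) ↔ p.2 < f p.1 := by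
  simp only [Finset.mem_biUnion, Finset.mem_range, Finset.mem_product, Finset.mem_singleton]
  constructor
  · rintro ⟨x, hx, h1, h2⟩; rw [h1]; exact h2
  · intro h
    refine ⟨p.1, ?_, rfl, h⟩
    by_contra hc
    rw [hR p.1 (by omega)] at h
    omega

/-- Build a Young diagram from an antitone, eventually-zero row profile. -/
def ofRows (f : ℕ → ℕ) (hf : Antitone f) (R : ℕ) (hR : ∀ i, R ≤ i → f i = 0) : YoungDiagram where
  cells := (Finset.range R).biUnion (fun x => {x} ×ˢ Finset.range (f x))
  isLowerSet := by
    intro x y hxy hx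
    rw [Finset.mem_coe, mem_rowsFinset hR] at hx ⊢
    calc y.2 ≤ x.2 := hxy.2
    _ < f x.1 := hx
    _ ≤ f y.1 := hf hxy.1

lemma mem_ofRows {f : ℕ → ℕ} {hf : Antitone f} {R : ℕ} {hR : ∀ i, R ≤ i → f i = 0} {p : ℕ × ℕ} :
    p ∈ ofRows f hf R hR ↔ p.2 < f p.1 := by
  rw [← YoungDiagram.mem_cells]
  exact mem_rowsFinset hR p

lemma rowLen_ofRows (f : ℕ → ℕ) (hf : Antitone f) (R : ℕ) (hR : ∀ i, R ≤ i → f i = 0) (i : ℕ) :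
    (ofRows f hf R hR).rowLen i = f i := by
  have h1 : ∀ j, j < (ofRows f hf R hR).rowLen i ↔ j < f i := by
    intro j
    rw [← YoungDiagram.mem_iff_lt_rowLen, mem_ofRows]
  by_contra hc
  rcases Nat.lt_or_ge ((ofRows f hf R hR).rowLen i) (f i) with h | h
  · have h2 := (h1 _).mpr h
    omega
  · have h3 : f i < f i := (h1 (f i)).mp (by omega)
    omega


lemma mem_of_le {μ ν : YoungDiagram} (h : μ ≤ ν) {p : ℕ × ℕ} (hp : p ∈ μ) : p ∈ ν := by
  have h2 := YoungDiagram.cells_subset_iff.mpr h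
  rw [← YoungDiagram.mem_cells] at hp ⊢
  exact h2 hp

lemma nat_eq_of_lt_iff {x y : ℕ} (h : ∀ j, j < x ↔ j < y) : x = y := by
  have h1 := h x
  have h2 := h y
  omega

lemma nat_le_of_lt_imp {x y : ℕ} (h : ∀ j, j < x → j < y) : x ≤ y := by
  by_contra hc
  have := h y (by omega)
  omega

lemma rowLen_mono {μ ν : YoungDiagram} (h : μ ≤ ν) (i : ℕ) : μ.rowLen i ≤ ν.rowLen i := by
  apply nat_le_of_lt_imp
  intro j hj
  rw [← YoungDiagram.mem_iff_lt_rowLen] at hj ⊢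
  exact h hj

lemma dc_finset (Q : Finset ℕ) (h : ∀ j ∈ Q, ∀ j', j' ≤ j → j' ∈ Q) :
    Q = Finset.range Q.card := by
  rcases Finset.eq_empty_or_nonempty Q with rfl | hne
  · simp
  · have hQ : Q = Finset.range (Q.max' hne + 1) := by
      ext j
      rw [Finset.mem_range]
      constructor
      · intro hj
        have := Finset.le_max' Q j hj
        omega
      · intro hj
        exact h _ (Q.max'_mem hne) j (by omega)
    rw [hQ, Finset.card_range]

section Extract

variable {α β μ : YoungDiagram} (W : LRFilling α β μ)

/-- fibers of T are finite -/
lemma fiber_finite (v : ℕ) : Finite {p : ℕ × ℕ // W.T p.1 p.2 = v + 1} := by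
  apply Finite.of_injective
    (fun q : {p : ℕ × ℕ // W.T p.1 p.2 = v + 1} =>
      (⟨q.1, by
        rw [YoungDiagram.mem_cells]
        exact ((W.supp q.1.1 q.1.2).mp (by rw [q.2]; omega)).1⟩ : {p : ℕ × ℕ // p ∈ μ.cells}))
  intro a b hab
  simpa [Subtype.ext_iff] using hab

/-- entries are bounded by the number of parts of β -/
lemma T_le (i j : ℕ) (h : W.T i j ≠ 0) : W.T i j ≤ β.colLen 0 := by
  set v := W.T i j with hv
  have h1 : 0 < Nat.card {p : ℕ × ℕ // W.T p.1 p.2 = (v - 1) + 1} := by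
    have : Finite {p : ℕ × ℕ // W.T p.1 p.2 = (v-1) + 1} := fiber_finite W (v-1)
    rw [Nat.card_pos_iff]
    exact ⟨⟨⟨(i, j), by show W.T i j = v - 1 + 1; omega⟩⟩, this⟩
  rw [W.content (v-1)] at h1
  have h2 : (v - 1, 0) ∈ β := by rw [YoungDiagram.mem_iff_lt_rowLen]; omega
  rw [YoungDiagram.mem_iff_lt_colLen] at h2
  omega

/-- the chain of partitions: row profile of `α ∪ {cells with value ≤ k}` -/
def gch (k i : ℕ) : ℕ :=
  ((Finset.range (μ.rowLen i)).filter (fun j => j < α.rowLen i ∨ W.T i j ≤ k)).card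

lemma mem_gch {k i j : ℕ} :
    j < gch W k i ↔ j < μ.rowLen i ∧ (j < α.rowLen i ∨ W.T i j ≤ k) := by
  have hdc : ((Finset.range (μ.rowLen i)).filter (fun j => j < α.rowLen i ∨ W.T i j ≤ k)) =
      Finset.range (gch W k i) := by
    rw [gch]
    apply dc_finset
    intro a ha b hba
    simp only [Finset.mem_filter, Finset.mem_range] at ha ⊢
    obtain ⟨ham, hd⟩ := ha
    refine ⟨by omega, ?_⟩
    by_cases hbα : b < α.rowLen i
    · exact Or.inl hbα
    · right
      rcases hd with hd | hd
      · omega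
      · rcases Nat.eq_or_lt_of_le hba with rfl | hlt
        · exact hd
        · have hbm : (i, b) ∈ μ := by rw [YoungDiagram.mem_iff_lt_rowLen]; omega
          have hbT : W.T i b ≠ 0 := by
            rw [W.supp]
            exact ⟨hbm, fun hc => hbα (YoungDiagram.mem_iff_lt_rowLen.mp hc)⟩
          have haT : W.T i a ≠ 0 := by
            rw [W.supp]
            refine ⟨by rw [YoungDiagram.mem_iff_lt_rowLen]; omega, fun hc => ?_⟩
            have := YoungDiagram.mem_iff_lt_rowLen.mp hc
            have : (i, b) ∈ α := α.up_left_mem le_rfl hba hc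
            exact hbα (YoungDiagram.mem_iff_lt_rowLen.mp this)
          have := W.rows_weak i b a hba hbT haT
          omega
  rw [show j < gch W k i ↔ j ∈ Finset.range (gch W k i) by rw [Finset.mem_range], ← hdc]
  simp only [Finset.mem_filter, Finset.mem_range]

lemma gch_zero (i : ℕ) : gch W 0 i = α.rowLen i := by
  apply nat_eq_of_lt_iff
  intro j
  rw [mem_gch]
  constructor
  · rintro ⟨hm, h | h⟩
    · exact h
    · have hT : W.T i j = 0 := by omega
      by_contra hc
      have : (i, j) ∉ α := fun hin => hc (YoungDiagram.mem_iff_lt_rowLen.mp hin)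
      have : W.T i j ≠ 0 := (W.supp i j).mpr ⟨by rw [YoungDiagram.mem_iff_lt_rowLen]; omega, this⟩
      omega
  · intro h
    have hm : (i, j) ∈ μ := mem_of_le W.sub (by rw [YoungDiagram.mem_iff_lt_rowLen]; exact h)
    exact ⟨YoungDiagram.mem_iff_lt_rowLen.mp hm, Or.inl h⟩

lemma gch_mono_k (k i : ℕ) : gch W k i ≤ gch W (k+1) i := by
  apply nat_le_of_lt_imp
  intro j hj
  rw [mem_gch] at hj ⊢
  rcases hj with ⟨h1, h2 | h2⟩
  · exact ⟨h1, Or.inl h2⟩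
  · exact ⟨h1, Or.inr (by omega)⟩

lemma gch_le_mu (k i : ℕ) : gch W k i ≤ μ.rowLen i := by
  apply nat_le_of_lt_imp
  intro j hj
  exact (mem_gch W |>.mp hj).1

lemma gch_anti (k : ℕ) : Antitone (gch W k) := by
  apply antitone_nat_of_succ_le
  intro i
  apply nat_le_of_lt_imp
  intro j hj
  rw [mem_gch] at hj ⊢
  obtain ⟨h1, h2⟩ := hj
  have hmem : (i, j) ∈ μ := μ.up_left_mem (show i ≤ i + 1 from Nat.le_succ i) le_rfl
    (by rw [YoungDiagram.mem_iff_lt_rowLen]; exact h1)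
  refine ⟨YoungDiagram.mem_iff_lt_rowLen.mp hmem, ?_⟩
  by_cases hα : j < α.rowLen i
  · exact Or.inl hα
  · right
    rcases h2 with h2 | h2
    · exfalso
      have hin : (i, j) ∈ α := α.up_left_mem (show i ≤ i + 1 from Nat.le_succ i) le_rfl
        (by rw [YoungDiagram.mem_iff_lt_rowLen]; exact h2)
      exact hα (YoungDiagram.mem_iff_lt_rowLen.mp hin)
    · have hTi : W.T i j ≠ 0 := by
        rw [W.supp]
        exact ⟨hmem, fun hc => hα (YoungDiagram.mem_iff_lt_rowLen.mp hc)⟩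
      have hTi1 : W.T (i+1) j ≠ 0 := by
        by_contra hc
        have hμ : (i+1, j) ∈ μ := by rw [YoungDiagram.mem_iff_lt_rowLen]; exact h1
        have ha1 : (i+1, j) ∈ α := by
          by_contra hc2
          exact ((W.supp (i+1) j).mpr ⟨hμ, hc2⟩) hc
        have ha0 : (i, j) ∈ α := α.up_left_mem (show i ≤ i + 1 from Nat.le_succ i) le_rfl ha1
        exact hα (YoungDiagram.mem_iff_lt_rowLen.mp ha0)
      have := W.cols_strict i (i+1) j (by omega) hTi hTi1
      omega

lemma gch_interlace (k i : ℕ) : gch W (k+1) (i+1) ≤ gch W k i := by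
  apply nat_le_of_lt_imp
  intro j hj
  rw [mem_gch] at hj ⊢
  obtain ⟨h1, h2⟩ := hj
  have hmem : (i, j) ∈ μ := μ.up_left_mem (show i ≤ i + 1 from Nat.le_succ i) le_rfl
    (by rw [YoungDiagram.mem_iff_lt_rowLen]; exact h1)
  refine ⟨YoungDiagram.mem_iff_lt_rowLen.mp hmem, ?_⟩
  by_cases hα : j < α.rowLen i
  · exact Or.inl hα
  · right
    rcases h2 with h2 | h2
    · exfalso
      have hin : (i, j) ∈ α := α.up_left_mem (show i ≤ i + 1 from Nat.le_succ i) le_rfl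
        (by rw [YoungDiagram.mem_iff_lt_rowLen]; exact h2)
      exact hα (YoungDiagram.mem_iff_lt_rowLen.mp hin)
    · have hTi : W.T i j ≠ 0 := by
        rw [W.supp]
        exact ⟨hmem, fun hc => hα (YoungDiagram.mem_iff_lt_rowLen.mp hc)⟩
      by_cases hT1 : W.T (i+1) j = 0
      · exfalso
        have hμ1 : (i+1, j) ∈ μ := by rw [YoungDiagram.mem_iff_lt_rowLen]; exact h1
        have ha1 : (i+1, j) ∈ α := by
          by_contra hc2
          exact ((W.supp (i+1) j).mpr ⟨hμ1, hc2⟩) hT1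
        have ha0 : (i, j) ∈ α := α.up_left_mem (show i ≤ i + 1 from Nat.le_succ i) le_rfl ha1
        exact hα (YoungDiagram.mem_iff_lt_rowLen.mp ha0)
      · have := W.cols_strict i (i+1) j (by omega) hTi hT1
        omega

lemma gch_top (k i : ℕ) (hk : β.colLen 0 ≤ k) : gch W k i = μ.rowLen i := by
  apply nat_eq_of_lt_iff
  intro j
  rw [mem_gch]
  constructor
  · rintro ⟨h, _⟩; exact h
  · intro h
    refine ⟨h, ?_⟩
    by_cases hα : j < α.rowLen i
    · exact Or.inl hα
    · right
      by_cases hT : W.T i j = 0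
      · omega
      · have := T_le W i j hT
        omega

lemma val_iff (i j k : ℕ) : W.T i j = k + 1 ↔ (gch W k i ≤ j ∧ j < gch W (k+1) i) := by
  constructor
  · intro h
    have hT : W.T i j ≠ 0 := by omega
    obtain ⟨hμ, hα⟩ := (W.supp i j).mp hT
    rw [YoungDiagram.mem_iff_lt_rowLen] at hμ
    have hαr : ¬ j < α.rowLen i := fun hc =>
      hα (by rw [YoungDiagram.mem_iff_lt_rowLen]; exact hc)
    constructor
    · by_contra hc
      push_neg at hc
      rw [mem_gch] at hc
      rcases hc.2 with h2 | h2
      · exact hαr h2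
      · omega
    · rw [mem_gch]
      exact ⟨hμ, Or.inr (by omega)⟩
  · rintro ⟨h1, h2⟩
    rw [mem_gch] at h2
    obtain ⟨hμ, hd⟩ := h2
    have hnot : ¬ (j < μ.rowLen i ∧ (j < α.rowLen i ∨ W.T i j ≤ k)) := by
      rw [← mem_gch (W := W)]
      omega
    push_neg at hnot
    have hd2 := hnot hμ
    rcases hd with hd | hd
    · have := hd2.1
      omega
    · have := hd2.2
      omega

lemma content_sum (k : ℕ) :
    S (gch W (k+1)) (gch W k) (μ.colLen 0) = β.rowLen k := by
  rw [← card_D, ← natCard_of_finset (fun p => W.T p.1 p.2 = k + 1), W.content k]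
  intro p
  rw [mem_D, val_iff W p.1 p.2 k]
  constructor
  · rintro ⟨h1, h2⟩
    refine ⟨?_, h1, h2⟩
    have : (p.1, p.2) ∈ μ := by
      rw [YoungDiagram.mem_iff_lt_rowLen]
      have := gch_le_mu W (k+1) p.1
      omega
    have := μ.up_left_mem le_rfl (Nat.zero_le p.2) this
    rw [YoungDiagram.mem_iff_lt_colLen] at this
    exact this
  · rintro ⟨_, h1, h2⟩
    exact ⟨h1, h2⟩

lemma row_ballot (k i : ℕ) :
    S (gch W (k+2)) (gch W (k+1)) (i+1) ≤ S (gch W (k+1)) (gch W k) i := by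
  have hb := W.ballot i (gch W (k+1) i) k
  have e1 : Nat.card {p : ℕ × ℕ //
      (p.1 < i ∨ (p.1 = i ∧ gch W (k+1) i ≤ p.2)) ∧ W.T p.1 p.2 = k + 2}
      = (D (gch W (k+2)) (gch W (k+1)) (i+1)).card := by
    apply natCard_of_finset
    intro p
    rw [mem_D, show k + 2 = (k+1) + 1 from rfl, val_iff W p.1 p.2 (k+1)]
    constructor
    · rintro ⟨hpre, h1, h2⟩
      exact ⟨by omega, h1, h2⟩
    · rintro ⟨hlt, h1, h2⟩
      refine ⟨?_, h1, h2⟩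
      rcases Nat.lt_or_ge p.1 i with h | h
      · exact Or.inl h
      · have hp1 : p.1 = i := by omega
        subst hp1
        exact Or.inr ⟨rfl, h1⟩
  have e2 : Nat.card {p : ℕ × ℕ //
      (p.1 < i ∨ (p.1 = i ∧ gch W (k+1) i ≤ p.2)) ∧ W.T p.1 p.2 = k + 1}
      = (D (gch W (k+1)) (gch W k) i).card := by
    apply natCard_of_finset
    intro p
    rw [mem_D, val_iff W p.1 p.2 k]
    constructor
    · rintro ⟨hpre, h1, h2⟩
      refine ⟨?_, h1, h2⟩
      rcases hpre with h | ⟨rfl, h⟩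
      · exact h
      · omega
    · rintro ⟨hlt, h1, h2⟩
      exact ⟨Or.inl hlt, h1, h2⟩
  rw [e1, e2, card_D, card_D] at hb
  exact hb

end Extract

lemma fiber_finite' {μ ν lam : YoungDiagram} (W : LRFilling μ ν lam) (v : ℕ) :
    Finite {p : ℕ × ℕ // W.T p.1 p.2 = v + 1} := by
  apply Finite.of_injective
    (fun q : {p : ℕ × ℕ // W.T p.1 p.2 = v + 1} =>
      (⟨q.1, by
        rw [YoungDiagram.mem_cells]
        exact ((W.supp q.1.1 q.1.2).mp (by rw [q.2]; omega)).1⟩ : {p : ℕ × ℕ // p ∈ lam.cells}))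
  intro a b hab
  simpa [Subtype.ext_iff] using hab

lemma T_le_card {μ ν lam : YoungDiagram} (W : LRFilling μ ν lam) (i j : ℕ) :
    W.T i j ≤ lam.card := by
  set v := W.T i j with hv
  rcases Nat.eq_zero_or_pos v with h0 | hpos
  · omega
  have hrow : 1 ≤ ν.rowLen (v - 1) := by
    rw [← W.content (v-1)]
    have : Finite {p : ℕ × ℕ // W.T p.1 p.2 = (v-1) + 1} := fiber_finite' W (v-1)
    rw [Nat.succ_le_iff, Nat.card_pos_iff]
    exact ⟨⟨⟨(i, j), by show W.T i j = v - 1 + 1; omega⟩⟩, this⟩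
  have hw : ∀ k : Fin v, ∃ p : ℕ × ℕ, W.T p.1 p.2 = k.1 + 1 := by
    rintro ⟨k, hk⟩
    have hr : 1 ≤ ν.rowLen k := le_trans hrow (ν.rowLen_anti k (v-1) (by omega))
    rw [← W.content k] at hr
    have hfin : Finite {p : ℕ × ℕ // W.T p.1 p.2 = k + 1} := fiber_finite' W k
    have hne : Nonempty {p : ℕ × ℕ // W.T p.1 p.2 = k + 1} := by
      by_contra hc
      rw [not_nonempty_iff] at hc
      rw [Nat.card_of_isEmpty] at hr
      omega
    obtain ⟨⟨p, hp⟩⟩ := hne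
    exact ⟨p, hp⟩
  choose F hF using hw
  have hinj : Function.Injective (fun k : Fin v =>
      (⟨F k, by
        rw [YoungDiagram.mem_cells]
        exact ((W.supp (F k).1 (F k).2).mp (by rw [hF k]; omega)).1⟩ :
        {p : ℕ × ℕ // p ∈ lam.cells})) := by
    intro a b hab
    have : F a = F b := by simpa [Subtype.ext_iff] using hab
    have h1 := hF a
    have h2 := hF b
    rw [this] at h1
    have : a.1 = b.1 := by omega
    exact Fin.ext this
  have hcard := Fintype.card_le_of_injective _ hinj
  simp only [Fintype.card_fin, Fintype.card_coe] at hcard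
  exact hcard

instance LRfin (μ ν lam : YoungDiagram) : Finite (LRFilling μ ν lam) := by
  apply Finite.of_injective (fun W : LRFilling μ ν lam =>
    (fun p : {q : ℕ × ℕ // q ∈ lam.cells} =>
      (⟨W.T p.1.1 p.1.2, by have := T_le_card W p.1.1 p.1.2; omega⟩ : Fin (lam.card + 1))))
  intro W₁ W₂ h
  have hT : W₁.T = W₂.T := by
    funext i j
    by_cases hm : (i, j) ∈ lam.cells
    · have := congrFun h ⟨(i, j), hm⟩
      simpa [Fin.ext_iff] using this
    · have h1 : W₁.T i j = 0 := by
        by_contra hc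
        exact hm (by rw [YoungDiagram.mem_cells]; exact ((W₁.supp i j).mp hc).1)
      have h2 : W₂.T i j = 0 := by
        by_contra hc
        exact hm (by rw [YoungDiagram.mem_cells]; exact ((W₂.supp i j).mp hc).1)
      rw [h1, h2]
  obtain ⟨s₁, T₁, a₁, b₁, c₁, d₁, e₁⟩ := W₁
  obtain ⟨s₂, T₂, a₂, b₂, c₂, d₂, e₂⟩ := W₂
  simp only at hT
  subst hT
  rfl


lemma natCard_le_of_imp (P Q : ℕ × ℕ → Prop) (F : Finset (ℕ × ℕ))
    (h : ∀ p, P p → Q p) (hQ : ∀ p, Q p → p ∈ F) :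
    Nat.card {p : ℕ × ℕ // P p} ≤ Nat.card {p : ℕ × ℕ // Q p} := by
  have : Finite {p : ℕ × ℕ // Q p} := finite_of_finset Q F hQ
  exact Nat.card_le_card_of_injective
    (fun q : {p // P p} => (⟨q.1, h q.1 q.2⟩ : {p // Q p}))
    (fun a b hab => by simpa [Subtype.ext_iff] using hab)

section Construct

/-- the tableau associated to a chain of row profiles -/
def Tc (lam : YoungDiagram) (d : ℕ → ℕ → ℕ) (L : ℕ) (i j : ℕ) : ℕ :=
  if j < lam.rowLen i then ((Finset.range (L+1)).filter (fun k => d k i ≤ j)).card else 0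

variable {lam ν βm : YoungDiagram} {d : ℕ → ℕ → ℕ} {L R : ℕ}

lemma dmono' (hmono : ∀ k i, d k i ≤ d (k+1) i) :
    ∀ i k k', k ≤ k' → d k i ≤ d k' i := fun i =>
  monotone_nat_of_le_succ (fun k => hmono k i)

lemma dle (htop : ∀ k i, L ≤ k → d k i = lam.rowLen i) (hmono : ∀ k i, d k i ≤ d (k+1) i) :
    ∀ k i, d k i ≤ lam.rowLen i := by
  intro k i
  rcases le_or_gt k L with h | h
  · rw [← htop L i le_rfl]
    exact dmono' hmono i k L h
  · rw [htop k i (by omega)]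

lemma filt_eq (hmono : ∀ k i, d k i ≤ d (k+1) i) (i j : ℕ) :
    (Finset.range (L+1)).filter (fun k => d k i ≤ j)
      = Finset.range (((Finset.range (L+1)).filter (fun k => d k i ≤ j)).card) := by
  apply dc_finset
  intro a ha b hba
  simp only [Finset.mem_filter, Finset.mem_range] at ha ⊢
  exact ⟨by omega, le_trans (dmono' hmono i b a hba) ha.2⟩

lemma val_iff_c (htop : ∀ k i, L ≤ k → d k i = lam.rowLen i)
    (hmono : ∀ k i, d k i ≤ d (k+1) i) (i j k : ℕ) :
    Tc lam d L i j = k + 1 ↔ (d k i ≤ j ∧ j < d (k+1) i) := by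
  constructor
  · intro h
    have hguard : j < lam.rowLen i := by
      by_contra hc
      rw [Tc, if_neg hc] at h
      omega
    rw [Tc, if_pos hguard] at h
    have hfe := filt_eq (L := L) hmono i j
    rw [h] at hfe
    have hk : k ∈ (Finset.range (L+1)).filter (fun k => d k i ≤ j) := by
      rw [hfe]
      exact Finset.mem_range.mpr (by omega)
    simp only [Finset.mem_filter, Finset.mem_range] at hk
    refine ⟨hk.2, ?_⟩
    rcases le_or_gt (k+1) L with hkl | hkl
    · by_contra hc
      have hmem : k + 1 ∈ (Finset.range (L+1)).filter (fun k => d k i ≤ j) := by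
        simp only [Finset.mem_filter, Finset.mem_range]
        exact ⟨by omega, by omega⟩
      rw [hfe, Finset.mem_range] at hmem
      omega
    · rw [htop (k+1) i (by omega)]
      exact hguard
  · rintro ⟨h1, h2⟩
    have hguard : j < lam.rowLen i := lt_of_lt_of_le h2 (dle htop hmono (k+1) i)
    have hkL : k ≤ L := by
      by_contra hc
      rw [htop k i (by omega)] at h1
      omega
    rw [Tc, if_pos hguard]
    have hfe := filt_eq (L := L) hmono i j
    set c := ((Finset.range (L+1)).filter (fun k => d k i ≤ j)).card with hc
    have hin : k ∈ Finset.range c := by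
      rw [← hfe]
      simp only [Finset.mem_filter, Finset.mem_range]
      exact ⟨by omega, h1⟩
    rw [Finset.mem_range] at hin
    have hout : c ≤ k + 1 := by
      by_contra hout
      have hmem : k + 1 ∈ Finset.range c := Finset.mem_range.mpr (by omega)
      rw [← hfe] at hmem
      simp only [Finset.mem_filter, Finset.mem_range] at hmem
      omega
    omega

lemma supp_c (hd0 : ∀ i, d 0 i = ν.rowLen i) (hmono : ∀ k i, d k i ≤ d (k+1) i) (i j : ℕ) :
    Tc lam d L i j ≠ 0 ↔ ((i, j) ∈ lam ∧ (i, j) ∉ ν) := by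
  rw [YoungDiagram.mem_iff_lt_rowLen, show ((i,j) ∉ ν) ↔ ¬ j < ν.rowLen i by
    rw [YoungDiagram.mem_iff_lt_rowLen]]
  constructor
  · intro h
    have hguard : j < lam.rowLen i := by
      by_contra hc
      rw [Tc, if_neg hc] at h
      omega
    refine ⟨hguard, ?_⟩
    rw [Tc, if_pos hguard] at h
    have hfe := filt_eq (L := L) hmono i j
    have h0 : 0 ∈ (Finset.range (L+1)).filter (fun k => d k i ≤ j) := by
      rw [hfe]
      exact Finset.mem_range.mpr (by omega)
    simp only [Finset.mem_filter] at h0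
    rw [← hd0 i]
    omega
  · rintro ⟨hguard, hν⟩
    rw [Tc, if_pos hguard]
    have h0 : 0 ∈ (Finset.range (L+1)).filter (fun k => d k i ≤ j) := by
      simp only [Finset.mem_filter, Finset.mem_range]
      refine ⟨by omega, ?_⟩
      rw [hd0 i]
      omega
    have := Finset.card_pos.mpr ⟨0, h0⟩
    omega

lemma rows_weak_c (hmono : ∀ k i, d k i ≤ d (k+1) i) (i j₁ j₂ : ℕ) (hj : j₁ ≤ j₂)
    (h₁ : Tc lam d L i j₁ ≠ 0) (h₂ : Tc lam d L i j₂ ≠ 0) :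
    Tc lam d L i j₁ ≤ Tc lam d L i j₂ := by
  have hg₁ : j₁ < lam.rowLen i := by
    by_contra hc
    rw [Tc, if_neg hc] at h₁
    omega
  have hg₂ : j₂ < lam.rowLen i := by
    by_contra hc
    rw [Tc, if_neg hc] at h₂
    omega
  rw [Tc, if_pos hg₁, Tc, if_pos hg₂]
  apply Finset.card_le_card
  intro k hk
  simp only [Finset.mem_filter, Finset.mem_range] at hk ⊢
  exact ⟨hk.1, le_trans hk.2 hj⟩

lemma cols_step_c (htop : ∀ k i, L ≤ k → d k i = lam.rowLen i)
    (hmono : ∀ k i, d k i ≤ d (k+1) i) (hint : ∀ k i, d (k+1) (i+1) ≤ d k i) (i j : ℕ)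
    (h₁ : Tc lam d L i j ≠ 0) (h₂ : Tc lam d L (i+1) j ≠ 0) :
    Tc lam d L i j < Tc lam d L (i+1) j := by
  set t := Tc lam d L i j with ht
  set s := Tc lam d L (i+1) j with hs
  have hval1 : d (t-1) i ≤ j ∧ j < d t i := by
    have := (val_iff_c htop hmono i j (t-1)).mp (by omega)
    have e : t - 1 + 1 = t := by omega
    rw [e] at this
    exact this
  have hval2 : d (s-1) (i+1) ≤ j ∧ j < d s (i+1) := by
    have := (val_iff_c htop hmono (i+1) j (s-1)).mp (by omega)
    have e : s - 1 + 1 = s := by omega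
    rw [e] at this
    exact this
  by_contra hc
  push_neg at hc
  -- s ≤ t: then d t (i+1) ≤ d (t-1) i ≤ j  but  j < d s (i+1) ≤ d t (i+1)
  have h3 : d t (i+1) ≤ d (t-1) i := by
    have := hint (t-1) i
    have e : t - 1 + 1 = t := by omega
    rw [e] at this
    exact this
  have h4 : d s (i+1) ≤ d t (i+1) := dmono' hmono (i+1) s t hc
  omega

lemma cols_strict_c (hd0 : ∀ i, d 0 i = ν.rowLen i)
    (htop : ∀ k i, L ≤ k → d k i = lam.rowLen i)
    (hmono : ∀ k i, d k i ≤ d (k+1) i) (hint : ∀ k i, d (k+1) (i+1) ≤ d k i)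
    (i₁ i₂ j : ℕ) (hlt : i₁ < i₂)
    (h₁ : Tc lam d L i₁ j ≠ 0) (h₂ : Tc lam d L i₂ j ≠ 0) :
    Tc lam d L i₁ j < Tc lam d L i₂ j := by
  induction i₂ with
  | zero => omega
  | succ n ih =>
    rcases Nat.lt_or_ge i₁ n with hn | hn
    · have hmid : Tc lam d L n j ≠ 0 := by
        rw [supp_c hd0 hmono]
        obtain ⟨hl2, _⟩ := (supp_c (lam := lam) (L := L) hd0 hmono (n+1) j).mp h₂
        obtain ⟨_, hn1⟩ := (supp_c (lam := lam) (L := L) hd0 hmono i₁ j).mp h₁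
        refine ⟨lam.up_left_mem (Nat.le_succ n) le_rfl hl2, fun hc => ?_⟩
        exact hn1 (ν.up_left_mem (by omega) le_rfl hc)
      exact lt_trans (ih hn hmid) (cols_step_c htop hmono hint n j hmid h₂)
    · have he : i₁ = n := by omega
      subst he
      exact cols_step_c htop hmono hint i₁ j h₁ h₂

lemma content_c (htop : ∀ k i, L ≤ k → d k i = lam.rowLen i)
    (hmono : ∀ k i, d k i ≤ d (k+1) i) (hRlam : lam.colLen 0 ≤ R)
    (hcont : ∀ k, S (d (k+1)) (d k) R = βm.rowLen k) (k : ℕ) :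
    Nat.card {p : ℕ × ℕ // Tc lam d L p.1 p.2 = k + 1} = βm.rowLen k := by
  rw [natCard_of_finset _ (D (d (k+1)) (d k) R), card_D, hcont k]
  intro p
  rw [mem_D, val_iff_c htop hmono p.1 p.2 k]
  constructor
  · rintro ⟨h1, h2⟩
    refine ⟨?_, h1, h2⟩
    have hm : (p.1, p.2) ∈ lam := by
      rw [YoungDiagram.mem_iff_lt_rowLen]
      exact lt_of_lt_of_le h2 (dle htop hmono (k+1) p.1)
    have := lam.up_left_mem le_rfl (Nat.zero_le p.2) hm
    rw [YoungDiagram.mem_iff_lt_colLen] at this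
    omega
  · rintro ⟨_, h1, h2⟩
    exact ⟨h1, h2⟩

lemma ballot_c (htop : ∀ k i, L ≤ k → d k i = lam.rowLen i)
    (hmono : ∀ k i, d k i ≤ d (k+1) i)
    (hballot : ∀ k i, S (d (k+2)) (d (k+1)) (i+1) ≤ S (d (k+1)) (d k) i) (i j k : ℕ) :
    Nat.card {p : ℕ × ℕ // (p.1 < i ∨ (p.1 = i ∧ j ≤ p.2)) ∧ Tc lam d L p.1 p.2 = k + 2} ≤
      Nat.card {p : ℕ × ℕ // (p.1 < i ∨ (p.1 = i ∧ j ≤ p.2)) ∧ Tc lam d L p.1 p.2 = k + 1} := by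
  have step1 : Nat.card {p : ℕ × ℕ //
      (p.1 < i ∨ (p.1 = i ∧ j ≤ p.2)) ∧ Tc lam d L p.1 p.2 = k + 2}
      ≤ Nat.card {p : ℕ × ℕ // p.1 < i + 1 ∧ Tc lam d L p.1 p.2 = k + 2} := by
    apply natCard_le_of_imp _ _ (D (d (k+2)) (d (k+1)) (i+1))
    · rintro p ⟨hpre, hv⟩
      exact ⟨by omega, hv⟩
    · rintro p ⟨hp1, hv⟩
      rw [mem_D]
      rw [show k + 2 = (k+1)+1 from rfl, val_iff_c htop hmono p.1 p.2 (k+1)] at hv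
      exact ⟨hp1, hv.1, hv.2⟩
  have e1 : Nat.card {p : ℕ × ℕ // p.1 < i + 1 ∧ Tc lam d L p.1 p.2 = k + 2}
      = S (d (k+2)) (d (k+1)) (i+1) := by
    rw [natCard_of_finset _ (D (d (k+2)) (d (k+1)) (i+1)), card_D]
    intro p
    rw [mem_D, show k + 2 = (k+1)+1 from rfl, val_iff_c htop hmono p.1 p.2 (k+1)]
  have e2 : Nat.card {p : ℕ × ℕ // p.1 < i ∧ Tc lam d L p.1 p.2 = k + 1}
      = S (d (k+1)) (d k) i := by
    rw [natCard_of_finset _ (D (d (k+1)) (d k) i), card_D]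
    intro p
    rw [mem_D, val_iff_c htop hmono p.1 p.2 k]
  have step2 : Nat.card {p : ℕ × ℕ // p.1 < i ∧ Tc lam d L p.1 p.2 = k + 1}
      ≤ Nat.card {p : ℕ × ℕ //
        (p.1 < i ∨ (p.1 = i ∧ j ≤ p.2)) ∧ Tc lam d L p.1 p.2 = k + 1} := by
    apply natCard_le_of_imp _ _ (D (d (k+1)) (d k) (i+1))
    · rintro p ⟨hp1, hv⟩
      exact ⟨Or.inl hp1, hv⟩
    · rintro p ⟨hpre, hv⟩
      rw [mem_D]
      rw [val_iff_c htop hmono p.1 p.2 k] at hv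
      exact ⟨by omega, hv.1, hv.2⟩
  calc Nat.card {p : ℕ × ℕ // (p.1 < i ∨ (p.1 = i ∧ j ≤ p.2)) ∧ Tc lam d L p.1 p.2 = k + 2}
      ≤ S (d (k+2)) (d (k+1)) (i+1) := e1 ▸ step1
    _ ≤ S (d (k+1)) (d k) i := hballot k i
    _ = Nat.card {p : ℕ × ℕ // p.1 < i ∧ Tc lam d L p.1 p.2 = k + 1} := e2.symm
    _ ≤ _ := step2

/-- assembling an LR filling from a chain of row profiles -/
lemma construct (ν βm lam : YoungDiagram) (d : ℕ → ℕ → ℕ) (L R : ℕ)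
    (hsub : ν ≤ lam)
    (hd0 : ∀ i, d 0 i = ν.rowLen i)
    (htop : ∀ k i, L ≤ k → d k i = lam.rowLen i)
    (hmono : ∀ k i, d k i ≤ d (k+1) i)
    (hint : ∀ k i, d (k+1) (i+1) ≤ d k i)
    (hRlam : lam.colLen 0 ≤ R)
    (hballot : ∀ k i, S (d (k+2)) (d (k+1)) (i+1) ≤ S (d (k+1)) (d k) i)
    (hcont : ∀ k, S (d (k+1)) (d k) R = βm.rowLen k) :
    Nonempty (LRFilling ν βm lam) :=
  ⟨{ sub := hsub
     T := Tc lam d L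
     supp := supp_c hd0 hmono
     rows_weak := rows_weak_c hmono
     cols_strict := fun i₁ i₂ j hlt h₁ h₂ =>
        cols_strict_c hd0 htop hmono hint i₁ i₂ j hlt h₁ h₂
     content := content_c htop hmono hRlam hcont
     ballot := ballot_c htop hmono hballot }⟩

end Construct


end LR11

open LR11

/-- If `c^μ_{α,β} > 0` and `α ⊂ α⁺ ⊆ μ` with `α⁺` obtained from `α` by
adding one box, then there exists `β⁻ ⊂ β`, obtained from `β` by removing one box,
with `c^μ_{α⁺,β⁻} > 0`. -/
theorem lr_add_box_inner (μ α β αp : YoungDiagram)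
    (h : 0 < lrCoeff α β μ) (h1 : α ≤ αp) (h2 : αp ≤ μ) (hcard : αp.card = α.card + 1) :
    ∃ βm : YoungDiagram, βm ≤ β ∧ βm.card + 1 = β.card ∧ 0 < lrCoeff αp βm μ := by
  classical
  obtain ⟨W⟩ : Nonempty (LRFilling α β μ) := by
    rw [lrCoeff] at h
    exact (Nat.card_pos_iff.mp h).1
  set R := μ.colLen 0 with hR
  set L := β.colLen 0 with hL
  -- ######## the added box ########
  have hsubc : α.cells ⊆ αp.cells := YoungDiagram.cells_subset_iff.mpr h1
  have hcd : (αp.cells \ α.cells).card = 1 := by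
    rw [Finset.card_sdiff_of_subset hsubc]
    have e1 : αp.cells.card = αp.card := rfl
    have e2 : α.cells.card = α.card := rfl
    omega
  obtain ⟨b₀, hb⟩ := Finset.card_eq_one.mp hcd
  set r := b₀.1 with hr0
  set c := b₀.2 with hc0
  have hbin : (r, c) ∈ αp.cells \ α.cells := by
    rw [hb]
    simp [hr0, hc0]
  have hbαp : (r, c) ∈ αp := by
    rw [← YoungDiagram.mem_cells]
    exact (Finset.mem_sdiff.mp hbin).1
  have hbα : (r, c) ∉ α := by
    rw [← YoungDiagram.mem_cells]
    exact (Finset.mem_sdiff.mp hbin).2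
  have hunique : ∀ p : ℕ × ℕ, p ∈ αp → p ∉ α → p = (r, c) := by
    intro p hp hq
    have hmem : p ∈ αp.cells \ α.cells := by
      rw [Finset.mem_sdiff, YoungDiagram.mem_cells, YoungDiagram.mem_cells]
      exact ⟨hp, hq⟩
    rw [hb, Finset.mem_singleton] at hmem
    rw [hmem, hr0, hc0]
  have hcα : α.rowLen r = c := by
    apply nat_eq_of_lt_iff
    intro j
    constructor
    · intro hj
      by_contra hc2
      push_neg at hc2
      exact hbα (α.up_left_mem le_rfl hc2 (YoungDiagram.mem_iff_lt_rowLen.mpr hj))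
    · intro hj
      have hm : (r, j) ∈ αp := αp.up_left_mem le_rfl (by omega) hbαp
      have hmα : (r, j) ∈ α := by
        by_contra hc2
        have := hunique _ hm hc2
        rw [Prod.mk.injEq] at this
        omega
      exact YoungDiagram.mem_iff_lt_rowLen.mp hmα
  have hαprow : ∀ i, αp.rowLen i = α.rowLen i + (if i = r then 1 else 0) := by
    intro i
    apply nat_eq_of_lt_iff
    intro j
    by_cases hir : i = r
    · rw [if_pos hir, hir, hcα]
      constructor
      · intro hj
        have hm : (r, j) ∈ αp := YoungDiagram.mem_iff_lt_rowLen.mpr hj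
        by_cases hmα : (r, j) ∈ α
        · have := YoungDiagram.mem_iff_lt_rowLen.mp hmα
          omega
        · have := hunique _ hm hmα
          rw [Prod.mk.injEq] at this
          omega
      · intro hj
        rw [← YoungDiagram.mem_iff_lt_rowLen]
        exact αp.up_left_mem le_rfl (by omega) hbαp
    · rw [if_neg hir]
      constructor
      · intro hj
        have hm : (i, j) ∈ αp := YoungDiagram.mem_iff_lt_rowLen.mpr hj
        have hmα : (i, j) ∈ α := by
          by_contra hc2
          have := hunique _ hm hc2
          rw [Prod.mk.injEq] at this
          omega
        have := YoungDiagram.mem_iff_lt_rowLen.mp hmα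
        omega
      · intro hj
        have hmα : (i, j) ∈ α := YoungDiagram.mem_iff_lt_rowLen.mpr (by omega)
        exact YoungDiagram.mem_iff_lt_rowLen.mp (mem_of_le h1 hmα)
  have hrup : 1 ≤ r → c < α.rowLen (r-1) := by
    intro hrp
    have hm : (r-1, c) ∈ αp := αp.up_left_mem (by omega) le_rfl hbαp
    have hmα : (r-1, c) ∈ α := by
      by_contra hc2
      have := hunique _ hm hc2
      rw [Prod.mk.injEq] at this
      omega
    exact YoungDiagram.mem_iff_lt_rowLen.mp hmα
  have hbμ : (r, c) ∈ μ := mem_of_le h2 hbαp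
  have hrR : r < R := by
    have := μ.up_left_mem le_rfl (Nat.zero_le c) hbμ
    rw [YoungDiagram.mem_iff_lt_colLen] at this
    exact this
  -- ######## the value at the box ########
  have hTr : W.T r c ≠ 0 := (W.supp r c).mpr ⟨hbμ, hbα⟩
  obtain ⟨u, hu⟩ : ∃ u, W.T r c = u + 1 := ⟨W.T r c - 1, by omega⟩
  have hgm : ∀ i k k', k ≤ k' → gch W k i ≤ gch W k' i := fun i =>
    monotone_nat_of_le_succ (fun k => gch_mono_k W k i)
  have hval : gch W u r ≤ c ∧ c < gch W (u+1) r := (val_iff W r c u).mp hu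
  have hgkr : ∀ k, k ≤ u → gch W k r = c := by
    intro k hk
    have hlow : c ≤ gch W k r := by
      have := hgm r 0 k (by omega)
      rw [gch_zero W r, hcα] at this
      omega
    have hhigh := hgm r k u hk
    omega
  have hgz : ∀ k i, R ≤ i → gch W k i = 0 := by
    intro k i hi
    have h1 := gch_le_mu W k i
    have h2 : μ.rowLen i = 0 := rowLen_zero_of_ge (by omega)
    omega
  have huL : u < L := by
    have hpos : 1 ≤ β.rowLen u := by
      rw [← content_sum W u]
      have hterm : 1 ≤ gch W (u+1) r - gch W u r := by omega
      calc (1:ℕ) ≤ gch W (u+1) r - gch W u r := hterm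
        _ ≤ S (gch W (u+1)) (gch W u) (μ.colLen 0) :=
          Finset.single_le_sum (f := fun x => gch W (u+1) x - gch W u x)
            (fun x _ => Nat.zero_le _) (Finset.mem_range.mpr hrR)
    have : (u, 0) ∈ β := YoungDiagram.mem_iff_lt_rowLen.mpr (by omega)
    rw [YoungDiagram.mem_iff_lt_colLen] at this
    exact this
  -- ######## invoking the cascade ########
  set η : ℕ → ℕ := fun i => gch W u i + (if i = r then 1 else 0) with hηdef
  set G : ℕ → ℕ → ℕ := fun j => gch W (u + 1 + j) with hGdef
  set n := L - (u+1) with hn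
  have hηr : η r = c + 1 := by
    show gch W u r + (if r = r then 1 else 0) = c + 1
    rw [if_pos rfl, hgkr u le_rfl]
  have hηo : ∀ i, i ≠ r → η i = gch W u i := by
    intro i hi
    show gch W u i + (if i = r then 1 else 0) = gch W u i
    rw [if_neg hi]
    omega
  have hηanti : Antitone η := by
    apply antitone_nat_of_succ_le
    intro i
    rcases eq_or_ne (i+1) r with h1 | h1
    · rw [h1, hηr, hηo i (by omega)]
      have h3 := hrup (by omega)
      have h4 : α.rowLen (r-1) ≤ gch W u (r-1) := by
        have h5 := hgm (r-1) 0 u (by omega)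
        rw [gch_zero] at h5
        omega
      rw [show i = r - 1 from by omega]
      omega
    · rw [hηo _ h1]
      rcases eq_or_ne i r with h2 | h2
      · rw [h2, hηr]
        have h3 := gch_anti W u (show r ≤ r + 1 by omega)
        have h4 := hgkr u le_rfl
        omega
      · rw [hηo _ h2]
        exact gch_anti W u (by omega)
  have hηle : ∀ i, η i ≤ G 0 i := by
    intro i
    show η i ≤ gch W (u+1) i
    rcases eq_or_ne i r with h2 | h2
    · rw [h2, hηr]
      have := hval.2
      omega
    · rw [hηo _ h2]
      exact hgm i u (u+1) (by omega)
  have hintη : ∀ i, G 0 (i+1) ≤ η i := by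
    intro i
    show gch W (u+1) (i+1) ≤ η i
    have h3 := gch_interlace W u i
    rcases eq_or_ne i r with h2 | h2
    · rw [h2, hηr]
      rw [h2] at h3
      have h4 := hgkr u le_rfl
      omega
    · rw [hηo _ h2]
      exact h3
  have hstab : ∀ j i, n ≤ j → G j i = G n i := by
    intro j i hj
    show gch W (u+1+j) i = gch W (u+1+n) i
    rw [gch_top W (u+1+j) i (by omega), gch_top W (u+1+n) i (by omega)]
  have hηz : ∀ i, R ≤ i → η i = 0 := by
    intro i hi
    rw [hηo i (by omega), hgz u i hi]
  have hid : ∀ m, S (G 0) η m + (if r < m then 1 else 0) = S (gch W (u+1)) (gch W u) m := by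
    intro m
    have h5 := S_indicator_right (gch W (u+1)) (gch W u) r (by
      intro x
      rcases eq_or_ne x r with h6 | h6
      · rw [if_pos h6, h6, hgkr u le_rfl]
        have := hval.2
        omega
      · rw [if_neg h6]
        have := hgm x u (u+1) (by omega)
        omega) m
    exact h5
  have hbot : ∀ i, S (G 1) (G 0) (i+1) ≤ S (G 0) η i + 1 := by
    intro i
    have h5 := hid i
    have hrb := row_ballot W u i
    show S (gch W (u+2)) (gch W (u+1)) (i+1) ≤ S (G 0) η i + 1
    split_ifs at h5 <;> omega
  obtain ⟨F, w, Oanti, O1, O2, O4, O5, O6, Oz, O7, O8, O9a, O9b, O10⟩ :=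
    core R n η G (fun j => gch_anti W (u+1+j)) hηanti hηle
      (fun j i => gch_mono_k W (u+1+j) i) hintη (fun j i => gch_interlace W (u+1+j) i)
      hstab hηz (fun j i hi => hgz (u+1+j) i hi) hbot
      (fun j i => row_ballot W (u+1+j) i)
  -- ######## sizes ########
  have hsize0 : S (G 0) η R + 1 = β.rowLen u := by
    have h5 := hid R
    rw [if_pos hrR] at h5
    rw [h5]
    exact content_sum W u
  have hsizej : ∀ j, S (G (j+1)) (G j) R = β.rowLen (u+1+j) := fun j => content_sum W (u+1+j)
  -- ######## the new content βm ########
  set b' : ℕ → ℕ := fun k => β.rowLen k - (if k = u + w then 1 else 0) with hb'def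
  have hb1 : 1 ≤ β.rowLen (u + w) := by
    rcases Nat.eq_zero_or_pos w with hw | hw
    · rw [hw, Nat.add_zero]
      omega
    · obtain ⟨w', rfl⟩ : ∃ w', w = w' + 1 := ⟨w - 1, by omega⟩
      have h5 := O9b w'
      rw [if_pos rfl] at h5
      have h6 := hsizej w'
      rw [show u + (w' + 1) = u + 1 + w' from by omega]
      omega
  have hwL : u + w < L := by
    have h5 : (u + w, 0) ∈ β := YoungDiagram.mem_iff_lt_rowLen.mpr (by omega)
    rw [YoungDiagram.mem_iff_lt_colLen] at h5
    omega
  have hβz : ∀ k, L ≤ k → b' k = 0 := by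
    intro k hk
    show β.rowLen k - (if k = u + w then 1 else 0) = 0
    have h5 : β.rowLen k = 0 := rowLen_zero_of_ge (by omega)
    omega
  have hzS : ∀ j, S (F (j+1)) (F j) (R+1) = S (F (j+1)) (F j) R := by
    intro j
    rw [S_succ, Oz (j+1) R le_rfl, Oz j R le_rfl]
    omega
  have hstep : β.rowLen (u + w + 1) + 1 ≤ β.rowLen (u + w) := by
    rcases Nat.eq_zero_or_pos w with hw | hw
    · subst hw
      have h7 := O7 R
      have hz : S (F 1) (F 0) (R+1) = S (F 1) (F 0) R := hzS 0
      have h9 : S (G 1) (G 0) R = S (F 1) (F 0) R + (if 1 = 0 then 1 else 0) := O9b 0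
      rw [if_neg (by omega)] at h9
      have hj0 : S (G 1) (G 0) R = β.rowLen (u + 1) := hsizej 0
      have h9a := O9a
      rw [if_pos rfl] at h9a
      rw [show u + 0 + 1 = u + 1 from by omega, show u + 0 = u from by omega]
      omega
    · obtain ⟨w', rfl⟩ : ∃ w', w = w' + 1 := ⟨w - 1, by omega⟩
      have h8 := O8 w' R
      have hz2 : S (F (w'+2)) (F (w'+1)) (R+1) = S (F (w'+2)) (F (w'+1)) R := hzS (w'+1)
      have h9b1 : S (G (w'+2)) (G (w'+1)) R
          = S (F (w'+2)) (F (w'+1)) R + (if w' + 2 = w' + 1 then 1 else 0) := O9b (w'+1)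
      rw [if_neg (by omega)] at h9b1
      have h9b2 := O9b w'
      rw [if_pos rfl] at h9b2
      have hj1 : S (G (w'+2)) (G (w'+1)) R = β.rowLen (u+1+(w'+1)) := hsizej (w'+1)
      have hj2 := hsizej w'
      rw [show u + (w'+1) + 1 = u + 1 + (w'+1) from by omega,
        show u + (w'+1) = u + 1 + w' from by omega]
      omega
  have hb'anti : Antitone b' := by
    apply antitone_nat_of_succ_le
    intro k
    show β.rowLen (k+1) - (if k+1 = u+w then 1 else 0)
      ≤ β.rowLen k - (if k = u+w then 1 else 0)
    have hmo := β.rowLen_anti k (k+1) (by omega)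
    rcases eq_or_ne k (u+w) with h2 | h2
    · rw [if_neg (by omega), if_pos h2]
      have h5 := hstep
      rw [← h2] at h5
      omega
    · rw [if_neg h2]
      split_ifs <;> omega
  set βm := ofRows b' hb'anti L hβz with hβmdef
  have hβmr : ∀ k, βm.rowLen k = b' k := rowLen_ofRows b' hb'anti L hβz
  have hβmle : βm ≤ β := by
    rw [← YoungDiagram.cells_subset_iff]
    intro p hp
    rw [YoungDiagram.mem_cells] at hp ⊢
    have h5 : p.2 < b' p.1 := mem_ofRows.mp hp
    rw [YoungDiagram.mem_iff_lt_rowLen]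
    have h6 : b' p.1 ≤ β.rowLen p.1 := by
      show β.rowLen p.1 - (if p.1 = u + w then 1 else 0) ≤ β.rowLen p.1
      omega
    omega
  have hβmcol : βm.colLen 0 ≤ L := by
    by_contra hc
    have h5 : (L, 0) ∈ βm := YoungDiagram.mem_iff_lt_colLen.mpr (by omega)
    rw [YoungDiagram.mem_iff_lt_rowLen, hβmr] at h5
    have h6 := hβz L le_rfl
    omega
  have hcardeq : βm.card + 1 = β.card := by
    rw [card_eq_sum_rowLens βm L hβmcol, card_eq_sum_rowLens β L (by omega)]
    have hsum : ∀ k ∈ Finset.range L, β.rowLen k = βm.rowLen k + (if k = u + w then 1 else 0) := by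
      intro k _
      rw [hβmr k]
      show β.rowLen k = β.rowLen k - (if k = u + w then 1 else 0) + (if k = u + w then 1 else 0)
      split_ifs with h5
      · rw [h5]
        omega
      · omega
    rw [Finset.sum_congr rfl hsum, Finset.sum_add_distrib,
      Finset.sum_ite_eq' (Finset.range L) (u + w) (fun _ => 1),
      if_pos (Finset.mem_range.mpr hwL)]
  -- ######## the final chain ########
  set dd : ℕ → ℕ → ℕ :=
    fun k i => if k ≤ u then gch W k i + (if i = r then 1 else 0) else F (k - (u+1)) i
    with hdddef
  have ddlow : ∀ k i, k ≤ u → dd k i = gch W k i + (if i = r then 1 else 0) := by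
    intro k i hk
    rw [hdddef]
    simp only
    rw [if_pos hk]
  have ddhigh : ∀ k i, u < k → dd k i = F (k - (u+1)) i := by
    intro k i hk
    rw [hdddef]
    simp only
    rw [if_neg (by omega)]
  have ddu : ∀ i, dd u i = η i := by
    intro i
    rw [ddlow u i le_rfl, hηdef]
  have hd0' : ∀ i, dd 0 i = αp.rowLen i := by
    intro i
    rw [ddlow 0 i (by omega), gch_zero, hαprow i]
  have htop' : ∀ k i, L ≤ k → dd k i = μ.rowLen i := by
    intro k i hk
    rw [ddhigh k i (by omega), O6 (k - (u+1)) i (by omega)]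
    show gch W (u+1+n) i = μ.rowLen i
    exact gch_top W _ i (by omega)
  have hmono'' : ∀ k i, dd k i ≤ dd (k+1) i := by
    intro k i
    by_cases hA : k + 1 ≤ u
    · rw [ddlow k i (by omega), ddlow (k+1) i hA]
      have := gch_mono_k W k i
      omega
    · by_cases hB : k ≤ u
      · have hk : k = u := by omega
        rw [hk]
        calc dd u i = η i := ddu i
          _ ≤ F 0 i := O1 i
          _ = dd (u+1) i := by
            rw [ddhigh (u+1) i (by omega), show u+1-(u+1) = 0 from by omega]
      · rw [ddhigh k i (by omega), ddhigh (k+1) i (by omega),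
          show k+1-(u+1) = (k-(u+1))+1 from by omega]
        exact O2 _ i
  have hint'' : ∀ k i, dd (k+1) (i+1) ≤ dd k i := by
    intro k i
    by_cases hA : k + 1 ≤ u
    · rw [ddlow (k+1) (i+1) hA, ddlow k i (by omega)]
      rcases eq_or_ne (i+1) r with h5 | h5
      · rw [if_pos h5, if_neg (by omega), h5, hgkr (k+1) hA]
        have h6 := hrup (by omega)
        have h7 : α.rowLen (r-1) ≤ gch W k (r-1) := by
          have h8 := hgm (r-1) 0 k (by omega)
          rw [gch_zero] at h8
          omega
        rw [show i = r - 1 from by omega]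
        omega
      · rw [if_neg h5]
        have := gch_interlace W k i
        split_ifs <;> omega
    · by_cases hB : k ≤ u
      · have hk : k = u := by omega
        rw [hk, ddu, ddhigh (u+1) (i+1) (by omega), show u+1-(u+1) = 0 from by omega]
        exact O4 i
      · rw [ddhigh (k+1) (i+1) (by omega), ddhigh k i (by omega),
          show k+1-(u+1) = (k-(u+1))+1 from by omega]
        exact O5 _ i
  have hballot'' : ∀ k i, S (dd (k+2)) (dd (k+1)) (i+1) ≤ S (dd (k+1)) (dd k) i := by
    intro k i
    by_cases hA : k + 2 ≤ u
    · have e1 : S (dd (k+2)) (dd (k+1)) (i+1) = S (gch W (k+2)) (gch W (k+1)) (i+1) :=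
        S_congr _ _ _ _ (fun x => by
          rw [ddlow (k+2) x hA, ddlow (k+1) x (by omega)]
          omega) _
      have e2 : S (dd (k+1)) (dd k) i = S (gch W (k+1)) (gch W k) i :=
        S_congr _ _ _ _ (fun x => by
          rw [ddlow (k+1) x (by omega), ddlow k x (by omega)]
          omega) _
      rw [e1, e2]
      exact row_ballot W k i
    · by_cases hB : k + 1 ≤ u
      · have hk : k + 1 = u := by omega
        have hu1 : 1 ≤ u := by omega
        have e1 : S (dd (k+2)) (dd (k+1)) (i+1) = S (F 0) η (i+1) :=
          S_congr _ _ _ _ (fun x => by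
            rw [ddhigh (k+2) x (by omega), show k+2-(u+1) = 0 from by omega,
              ddlow (k+1) x (by omega), hk]
            try simp only [hηdef]) _
        have e2 : S (dd (k+1)) (dd k) i = S (gch W u) (gch W (u-1)) i :=
          S_congr _ _ _ _ (fun x => by
            rw [ddlow (k+1) x (by omega), ddlow k x (by omega), hk,
              show k = u - 1 from by omega]
            omega) _
        rw [e1, e2]
        have hrb : S (gch W (u+1)) (gch W u) (i+1) ≤ S (gch W u) (gch W (u-1)) i := by
          have h5 := row_ballot W (u-1) i
          rw [show u-1+2 = u+1 from by omega, show u-1+1 = u from by omega] at h5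
          exact h5
        rcases O10 with hO | ⟨i₀, hbox, hviol⟩
        · rw [hO]
          have h5 := hid (i+1)
          split_ifs at h5 <;> omega
        · have hri₀ : r ≤ i₀ := by
            by_contra hc2
            push_neg at hc2
            have h5 := hid i₀
            rw [if_neg (by omega)] at h5
            have h6 := row_ballot W u i₀
            have h7 : S (G 1) (G 0) (i₀+1) = S (gch W (u+2)) (gch W (u+1)) (i₀+1) := rfl
            omega
          have hbox' : S (F 0) η (i+1) = S (G 0) η (i+1) + (if i₀ < i+1 then 1 else 0) := by
            rw [S_congr (F 0) η (fun x => G 0 x + if x = i₀ then 1 else 0) η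
              (fun x => by rw [hbox x]) (i+1)]
            exact S_indicator_left (G 0) η i₀ hηle (i+1)
          have h6 := hid (i+1)
          rw [hbox']
          by_cases h8 : i₀ < i + 1
          · rw [if_pos h8]
            rw [if_pos (by omega)] at h6
            omega
          · rw [if_neg h8]
            split_ifs at h6 <;> omega
      · by_cases hC : k ≤ u
        · have hk : k = u := by omega
          have e1 : S (dd (k+2)) (dd (k+1)) (i+1) = S (F 1) (F 0) (i+1) :=
            S_congr _ _ _ _ (fun x => by
              rw [ddhigh (k+2) x (by omega), show k+2-(u+1) = 1 from by omega,
                ddhigh (k+1) x (by omega), show k+1-(u+1) = 0 from by omega]) _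
          have e2 : S (dd (k+1)) (dd k) i = S (F 0) η i :=
            S_congr _ _ _ _ (fun x => by
              rw [ddhigh (k+1) x (by omega), show k+1-(u+1) = 0 from by omega,
                ddlow k x (by omega), hk]
              try simp only [hηdef]) _
          rw [e1, e2]
          exact O7 i
        · have e1 : S (dd (k+2)) (dd (k+1)) (i+1)
              = S (F ((k-(u+1))+2)) (F ((k-(u+1))+1)) (i+1) :=
            S_congr _ _ _ _ (fun x => by
              rw [ddhigh (k+2) x (by omega), show k+2-(u+1) = (k-(u+1))+2 from by omega,
                ddhigh (k+1) x (by omega), show k+1-(u+1) = (k-(u+1))+1 from by omega]) _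
          have e2 : S (dd (k+1)) (dd k) i = S (F ((k-(u+1))+1)) (F (k-(u+1))) i :=
            S_congr _ _ _ _ (fun x => by
              rw [ddhigh (k+1) x (by omega), show k+1-(u+1) = (k-(u+1))+1 from by omega,
                ddhigh k x (by omega)]) _
          rw [e1, e2]
          exact O8 (k-(u+1)) i
  have hcont'' : ∀ k, S (dd (k+1)) (dd k) R = βm.rowLen k := by
    intro k
    rw [hβmr k]
    show _ = β.rowLen k - (if k = u + w then 1 else 0)
    by_cases hA : k + 1 ≤ u
    · have e2 : S (dd (k+1)) (dd k) R = S (gch W (k+1)) (gch W k) R :=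
        S_congr _ _ _ _ (fun x => by
          rw [ddlow (k+1) x hA, ddlow k x (by omega)]
          omega) _
      rw [e2, if_neg (by omega), Nat.sub_zero]
      exact content_sum W k
    · by_cases hB : k ≤ u
      · have hk : k = u := by omega
        have e1 : S (dd (k+1)) (dd k) R = S (F 0) η R :=
          S_congr _ _ _ _ (fun x => by
            rw [ddhigh (k+1) x (by omega), show k+1-(u+1) = 0 from by omega,
              ddlow k x (by omega), hk]
            try simp only [hηdef]) _
        rw [e1, hk]
        have h9a := O9a
        by_cases hw : w = 0
        · rw [if_pos (show u = u + w from by omega)]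
          rw [if_pos hw] at h9a
          omega
        · rw [if_neg (show ¬ u = u + w from by omega)]
          rw [if_neg hw] at h9a
          omega
      · have e1 : S (dd (k+1)) (dd k) R = S (F ((k-(u+1))+1)) (F (k-(u+1))) R :=
          S_congr _ _ _ _ (fun x => by
            rw [ddhigh (k+1) x (by omega), show k+1-(u+1) = (k-(u+1))+1 from by omega,
              ddhigh k x (by omega)]) _
        rw [e1]
        have h9b := O9b (k - (u+1))
        have hj := hsizej (k - (u+1))
        rw [show u + 1 + (k - (u+1)) = k from by omega] at hj
        by_cases hw : k - (u+1) + 1 = w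
        · rw [if_pos (show k = u + w from by omega)]
          rw [if_pos hw] at h9b
          omega
        · rw [if_neg (show ¬ k = u + w from by omega)]
          rw [if_neg hw] at h9b
          omega
  obtain ⟨WF⟩ := construct αp βm μ dd L R h2 hd0' htop' hmono'' hint'' le_rfl hballot'' hcont''
  refine ⟨βm, hβmle, hcardeq, ?_⟩
  rw [lrCoeff]
  have hfin : Finite (LRFilling αp βm μ) := LRfin αp βm μ
  exact Nat.card_pos_iff.mpr ⟨⟨WF⟩, hfin⟩
end

section
/- For every partition λ with |λ| even, there exists a partition μ with c^λ_{μ,μ} > 0. -/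
open YoungDiagram

/-!
Group the rows of `lam` in pairs `(λ₂ₖ, λ₂ₖ₊₁)` and let `μₖ` be half of `λ₂ₖ + λ₂ₖ₊₁`, rounded
up or down so that `μ₀ + ⋯ + μₖ₋₁ = ⌊P(2k) / 2⌋`, where `P(i) = λ₀ + ⋯ + λᵢ₋₁`; as `|lam|` is
even, `|μ| = |lam| / 2`. The LR tableau of shape `lam / μ` and content `μ` is read off a chain
`μ = ν⁰ ⊆ ν¹ ⊆ ⋯ ⊆ lam`: `νᵏ` agrees with `lam` in the rows above `2k` and, from row `2k` on,
lists the halves `μₖ, μₖ₊₁, …`, minus one cell in row `k + b` when `P(2k), P(2k+2), …, P(2b)` is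
a maximal run of odd numbers. In closed form, the first `k + m` rows of `νᵏ` hold
`⌊P(2k) / 2⌋ + ⌊P(2m) / 2⌋ + [P(2k), …, P(2m) all odd]` cells (`k ≤ m`), and with this formula
the horizontal strip and ballot conditions become linear inequalities between the `μⱼ` and the
parities of the `P(2j)`, all coming from `λ₂ⱼ₊₂ + λ₂ⱼ₊₃ < λ₂ⱼ + λ₂ⱼ₊₁` when the former is odd.
-/

open Finset

namespace YoungDiagram

def rowLenSum (γ : YoungDiagram) (i : ℕ) : ℕ := ∑ r ∈ range i, γ.rowLen r

theorem rowLenSum_succ (γ : YoungDiagram) (i : ℕ) :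
    γ.rowLenSum (i + 1) = γ.rowLenSum i + γ.rowLen i :=
  sum_range_succ _ _

theorem rowLenSum_of_colLen_le (γ : YoungDiagram) {n : ℕ} (hn : γ.colLen 0 ≤ n) :
    γ.rowLenSum n = γ.card := by
  symm
  refine (card_eq_sum_card_fiberwise (f := Prod.fst) fun c hc => ?_).trans
    (sum_congr rfl fun r _ => ?_)
  · have := mem_iff_lt_colLen.1 ((mem_cells c).1 hc)
    have := γ.colLen_anti 0 c.2 c.2.zero_le
    simp only [coe_range, Set.mem_Iio]
    omega
  · rw [rowLen_eq_card]
    rfl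

def truncRows (γ : YoungDiagram) (f : ℕ → ℕ) (hf : Antitone f) : YoungDiagram where
  cells := γ.cells.filter fun c => c.2 < f c.1
  isLowerSet c d hdc hd := by
    simp only [coe_filter, mem_cells, Set.mem_ofPred_eq] at hd ⊢
    exact ⟨γ.isLowerSet hdc hd.1, (hdc.2.trans_lt hd.2).trans_le (hf hdc.1)⟩

variable {γ : YoungDiagram} {f : ℕ → ℕ} {hf : Antitone f}

theorem mem_truncRows {c : ℕ × ℕ} : c ∈ γ.truncRows f hf ↔ c ∈ γ ∧ c.2 < f c.1 := by
  simp [truncRows, ← mem_cells]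

theorem rowLen_truncRows (hfγ : ∀ r, f r ≤ γ.rowLen r) (r : ℕ) :
    (γ.truncRows f hf).rowLen r = f r :=
  eq_of_forall_lt_iff fun j => by
    rw [← mem_iff_lt_rowLen, mem_truncRows, mem_iff_lt_rowLen]
    have := hfγ r
    exact ⟨fun h => h.2, fun h => ⟨by omega, h⟩⟩

end YoungDiagram

theorem Nat.card_subtype_mono {β : Type*} {p q : β → Prop} (hq : {x | q x}.Finite)
    (h : ∀ x, p x → q x) : Nat.card {x // p x} ≤ Nat.card {x // q x} :=
  Nat.card_mono hq h

theorem Nat.card_rowStrips (a b : ℕ → ℕ) (n : ℕ) :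
    Nat.card {p : ℕ × ℕ // p.1 < n ∧ a p.1 ≤ p.2 ∧ p.2 < b p.1} =
      ∑ r ∈ range n, (b r - a r) := by
  let strips := ((range n).sigma fun r => Ico (a r) (b r)).map
    (Equiv.sigmaEquivProd ℕ ℕ).toEmbedding
  calc Nat.card {p : ℕ × ℕ // p.1 < n ∧ a p.1 ≤ p.2 ∧ p.2 < b p.1}
      = Nat.card strips := Nat.card_congr <| Equiv.subtypeEquivRight fun p => by
        simp [strips]
    _ = ∑ r ∈ range n, (b r - a r) := by
      rw [Nat.card_eq_finsetCard, card_map, Finset.card_sigma]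
      simp

namespace LRFilling

variable {μ ν lam : YoungDiagram} (F : LRFilling μ ν lam)

theorem finite_setOf_T_eq_succ (m : ℕ) : {p : ℕ × ℕ | F.T p.1 p.2 = m + 1}.Finite :=
  lam.cells.finite_toSet.subset fun p hp =>
    (YoungDiagram.mem_cells p).2 ((F.supp p.1 p.2).1 (by simp_all)).1

theorem T_le_colLen (i j : ℕ) : F.T i j ≤ ν.colLen 0 := by
  rcases Nat.eq_zero_or_pos (F.T i j) with h | h
  · omega
  obtain ⟨m, hm⟩ := Nat.exists_eq_add_one_of_ne_zero h.ne'
  have : Finite {p : ℕ × ℕ // F.T p.1 p.2 = m + 1} := (F.finite_setOf_T_eq_succ m).to_subtype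
  have : Nonempty {p : ℕ × ℕ // F.T p.1 p.2 = m + 1} := ⟨⟨(i, j), hm⟩⟩
  have hpos : 0 < ν.rowLen m := F.content m ▸ Nat.card_pos
  have := YoungDiagram.mem_iff_lt_colLen.1 (YoungDiagram.mem_iff_lt_rowLen.2 hpos)
  omega

theorem T_injective : Function.Injective (LRFilling.T (μ := μ) (ν := ν) (lam := lam)) := by
  rintro ⟨⟩ ⟨⟩ h
  cases h
  rfl

instance (μ ν lam : YoungDiagram) : Finite (LRFilling μ ν lam) := by
  refine Finite.of_injective (β := lam.cells → Fin (ν.colLen 0 + 1))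
    (fun F c => ⟨F.T c.1.1 c.1.2, Nat.lt_succ_of_le (F.T_le_colLen _ _)⟩) fun F G h => ?_
  refine T_injective (funext₂ fun i j => ?_)
  by_cases hij : (i, j) ∈ lam
  · simpa using congrFun h ⟨(i, j), (YoungDiagram.mem_cells _).2 hij⟩
  · have hF := mt (F.supp i j).1
    have hG := mt (G.supp i j).1
    simp_all

end LRFilling

/-- The row lengths `rowLen k` of a chain `μ = ν⁰ ⊆ ν¹ ⊆ ⋯ ⊆ lam` of Young diagrams whose steps
`νᵏ⁺¹ / νᵏ` are horizontal strips of `α.rowLen k` cells. Filling the `k`-th step with `k + 1`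
gives an LR filling once the `(k + 2)`-nd step has, in rows `≤ i`, no more cells than the
`(k + 1)`-st has in rows `< i`. -/
structure LRChain (μ α lam : YoungDiagram) where
  rowLen : ℕ → ℕ → ℕ
  rowLen_zero : ∀ r, rowLen 0 r = μ.rowLen r
  rowLen_le : ∀ k r, rowLen k r ≤ lam.rowLen r
  rowLen_succ_self : ∀ r, rowLen (r + 1) r = lam.rowLen r
  rowLen_succ_right_le : ∀ k r, rowLen k (r + 1) ≤ rowLen k r
  rowLen_le_succ_left : ∀ k r, rowLen k r ≤ rowLen (k + 1) r
  horizontal_strip : ∀ k r, rowLen (k + 1) (r + 1) ≤ rowLen k r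
  strip_card : ∀ k,
    ∑ r ∈ range (lam.colLen 0), (rowLen (k + 1) r - rowLen k r) = α.rowLen k
  ballot : ∀ k i,
    ∑ r ∈ range (i + 1), (rowLen (k + 2) r - rowLen (k + 1) r) ≤
      ∑ r ∈ range i, (rowLen (k + 1) r - rowLen k r)

namespace LRChain

variable {μ α lam : YoungDiagram} (C : LRChain μ α lam)

theorem rowLen_mono {k l : ℕ} (hkl : k ≤ l) (r : ℕ) : C.rowLen k r ≤ C.rowLen l r :=
  monotone_nat_of_le_succ (fun k => C.rowLen_le_succ_left k r) hkl

theorem rowLen_anti (k : ℕ) {r s : ℕ} (hrs : r ≤ s) : C.rowLen k s ≤ C.rowLen k r :=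
  antitone_nat_of_succ_le (C.rowLen_succ_right_le k) hrs

/-- A cell `(r, j)` of `lam / μ` is filled with the least `k` such that `(r, j) ∈ νᵏ`. -/
def entry (r j : ℕ) : ℕ :=
  if h : j < lam.rowLen r then
    Nat.find (⟨r + 1, C.rowLen_succ_self r ▸ h⟩ : ∃ k, j < C.rowLen k r)
  else 0

theorem entry_eq_succ_iff {r j k : ℕ} :
    C.entry r j = k + 1 ↔ C.rowLen k r ≤ j ∧ j < C.rowLen (k + 1) r := by
  unfold entry
  split_ifs with h
  · rw [Nat.find_eq_iff]
    refine ⟨fun ⟨hj, hlt⟩ => ⟨not_lt.1 (hlt k k.lt_succ_self), hj⟩, fun ⟨hk, hj⟩ => ⟨hj, ?_⟩⟩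
    exact fun n hn => not_lt.2 ((C.rowLen_mono (Nat.le_of_lt_succ hn) r).trans hk)
  · exact iff_of_false (by simp) fun ⟨_, hj⟩ => h (hj.trans_le (C.rowLen_le _ r))

theorem entry_ne_zero_iff {r j : ℕ} : C.entry r j ≠ 0 ↔ (r, j) ∈ lam ∧ (r, j) ∉ μ := by
  rw [YoungDiagram.mem_iff_lt_rowLen, YoungDiagram.mem_iff_lt_rowLen, ← C.rowLen_zero, entry]
  split_ifs with h
  · simp [h, Nat.find_eq_zero]
  · simp [h]

theorem entry_le_of_le {r j₁ j₂ : ℕ} (hj : j₁ ≤ j₂) (h₁ : C.entry r j₁ ≠ 0)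
    (h₂ : C.entry r j₂ ≠ 0) : C.entry r j₁ ≤ C.entry r j₂ := by
  unfold entry at *
  split_ifs at * with hj₁ hj₂
  · exact Nat.find_mono fun k hk => hj.trans_lt hk
  all_goals simp_all

theorem entry_lt_of_lt {r₁ r₂ j : ℕ} (hr : r₁ < r₂) (h₁ : C.entry r₁ j ≠ 0)
    (h₂ : C.entry r₂ j ≠ 0) : C.entry r₁ j < C.entry r₂ j := by
  obtain ⟨a, ha⟩ := Nat.exists_eq_add_one_of_ne_zero h₁
  obtain ⟨b, hb⟩ := Nat.exists_eq_add_one_of_ne_zero h₂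
  rw [ha, hb]
  by_contra! hba
  have ha' := C.entry_eq_succ_iff.1 ha
  have hb' := C.entry_eq_succ_iff.1 hb
  have := C.rowLen_anti (b + 1) (show r₁ + 1 ≤ r₂ from hr)
  have := C.rowLen_mono (show b + 1 ≤ a + 1 by omega) (r₁ + 1)
  have := C.horizontal_strip a r₁
  omega

theorem finite_setOf_entry_ne_zero : {p : ℕ × ℕ | C.entry p.1 p.2 ≠ 0}.Finite :=
  lam.cells.finite_toSet.subset fun p hp =>
    (YoungDiagram.mem_cells p).2 (C.entry_ne_zero_iff.1 hp).1

theorem lt_colLen_of_entry_ne_zero {r j : ℕ} (h : C.entry r j ≠ 0) : r < lam.colLen 0 :=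
  (YoungDiagram.mem_iff_lt_colLen.1 (C.entry_ne_zero_iff.1 h).1).trans_le
    (lam.colLen_anti 0 j j.zero_le)

theorem card_entry_eq_succ_of_lt (k i : ℕ) :
    Nat.card {p : ℕ × ℕ // p.1 < i ∧ C.entry p.1 p.2 = k + 1} =
      ∑ r ∈ range i, (C.rowLen (k + 1) r - C.rowLen k r) := by
  simp_rw [C.entry_eq_succ_iff]
  exact Nat.card_rowStrips _ _ _

theorem card_entry_eq_succ (k : ℕ) :
    Nat.card {p : ℕ × ℕ // C.entry p.1 p.2 = k + 1} = α.rowLen k := by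
  rw [← C.strip_card, ← C.card_entry_eq_succ_of_lt]
  exact Nat.card_congr <| Equiv.subtypeEquivRight fun p =>
    ⟨fun h => ⟨C.lt_colLen_of_entry_ne_zero (j := p.2) (by omega), h⟩, And.right⟩

theorem card_prefix_entry_le (i j k : ℕ) :
    Nat.card {p : ℕ × ℕ // (p.1 < i ∨ (p.1 = i ∧ j ≤ p.2)) ∧ C.entry p.1 p.2 = k + 2} ≤
      Nat.card {p : ℕ × ℕ // (p.1 < i ∨ (p.1 = i ∧ j ≤ p.2)) ∧ C.entry p.1 p.2 = k + 1} := by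
  have hfin (P : ℕ × ℕ → Prop) (l : ℕ) : {p : ℕ × ℕ | P p ∧ C.entry p.1 p.2 = l + 1}.Finite :=
    C.finite_setOf_entry_ne_zero.subset fun p hp => by simp_all
  calc _ ≤ Nat.card {p : ℕ × ℕ // p.1 < i + 1 ∧ C.entry p.1 p.2 = (k + 1) + 1} :=
        Nat.card_subtype_mono (hfin _ _) fun p hp => ⟨by omega, hp.2⟩
    _ ≤ Nat.card {p : ℕ × ℕ // p.1 < i ∧ C.entry p.1 p.2 = k + 1} := by
        rw [C.card_entry_eq_succ_of_lt, C.card_entry_eq_succ_of_lt]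
        exact C.ballot k i
    _ ≤ _ := Nat.card_subtype_mono (hfin _ _) fun p hp => ⟨Or.inl hp.1, hp.2⟩

def toLRFilling : LRFilling μ α lam where
  sub := fun c hc => by
    obtain ⟨r, j⟩ := c
    rw [YoungDiagram.mem_iff_lt_rowLen, ← C.rowLen_zero] at hc
    rw [YoungDiagram.mem_iff_lt_rowLen]
    exact hc.trans_le (C.rowLen_le 0 r)
  T := C.entry
  supp _ _ := C.entry_ne_zero_iff
  rows_weak _ _ _ := C.entry_le_of_le
  cols_strict _ _ _ := C.entry_lt_of_lt
  content := C.card_entry_eq_succ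
  ballot := C.card_prefix_entry_le

end LRChain

theorem lrCoeff_pos_of_lrChain {μ α lam : YoungDiagram} (C : LRChain μ α lam) :
    0 < lrCoeff μ α lam :=
  Nat.card_pos_iff.2 ⟨⟨C.toLRFilling⟩, inferInstance⟩

namespace PairHalving

variable (lam : YoungDiagram)

def carry (k : ℕ) : ℕ := lam.rowLenSum (2 * k) % 2

def halfSum (k : ℕ) : ℕ := lam.rowLenSum (2 * k) / 2

/-- `μₖ`. -/
def pairHalf (k : ℕ) : ℕ := halfSum lam (k + 1) - halfSum lam k

/-- `[P(2k), …, P(2m) all odd]`. -/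
def carryRun (k m : ℕ) : ℕ := ∏ j ∈ Icc k m, carry lam j

theorem carry_le_one (k : ℕ) : carry lam k ≤ 1 := by
  unfold carry
  omega

theorem carry_zero : carry lam 0 = 0 := rfl

theorem two_mul_halfSum_add_carry (k : ℕ) :
    2 * halfSum lam k + carry lam k = lam.rowLenSum (2 * k) := by
  unfold halfSum carry
  omega

theorem rowLenSum_two_mul_succ (k : ℕ) :
    lam.rowLenSum (2 * (k + 1)) =
      lam.rowLenSum (2 * k) + lam.rowLen (2 * k) + lam.rowLen (2 * k + 1) := by
  rw [show 2 * (k + 1) = 2 * k + 1 + 1 by ring, lam.rowLenSum_succ, lam.rowLenSum_succ]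

theorem halfSum_succ (k : ℕ) : halfSum lam (k + 1) = halfSum lam k + pairHalf lam k := by
  have := rowLenSum_two_mul_succ lam k
  unfold pairHalf halfSum
  omega

theorem two_mul_pairHalf_add_carry (k : ℕ) :
    2 * pairHalf lam k + carry lam (k + 1) =
      lam.rowLen (2 * k) + lam.rowLen (2 * k + 1) + carry lam k := by
  have := rowLenSum_two_mul_succ lam k
  have := two_mul_halfSum_add_carry lam k
  have := two_mul_halfSum_add_carry lam (k + 1)
  have := halfSum_succ lam k
  omega

theorem pairHalf_le_rowLen (k : ℕ) : pairHalf lam k ≤ lam.rowLen (2 * k) := by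
  have := two_mul_pairHalf_add_carry lam k
  have := lam.rowLen_anti (2 * k) (2 * k + 1) (by omega)
  have := carry_le_one lam k
  omega

theorem pairHalf_succ_le (k : ℕ) : pairHalf lam (k + 1) ≤ pairHalf lam k := by
  have := two_mul_pairHalf_add_carry lam k
  have : 2 * pairHalf lam (k + 1) + carry lam (k + 2) =
      lam.rowLen (2 * k + 2) + lam.rowLen (2 * k + 3) + carry lam (k + 1) :=
    two_mul_pairHalf_add_carry lam (k + 1)
  have := lam.rowLen_anti (2 * k) (2 * k + 1) (by omega)
  have := lam.rowLen_anti (2 * k + 1) (2 * k + 2) (by omega)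
  have := lam.rowLen_anti (2 * k + 2) (2 * k + 3) (by omega)
  have := carry_le_one lam k
  have := carry_le_one lam (k + 1)
  have := carry_le_one lam (k + 2)
  omega

/-- Either `μₖ` is rounded up and `μₖ₊₁` is not, or the rows `2k + 2, 2k + 3` have odd sum, hence
a smaller sum than the rows `2k, 2k + 1`. -/
theorem pairHalf_succ_lt (k : ℕ) (h₀ : carry lam (k + 1) = 0)
    (h₁ : carry lam k = 1 ∨ carry lam (k + 2) = 1) : pairHalf lam (k + 1) < pairHalf lam k := by
  have := two_mul_pairHalf_add_carry lam k
  have : 2 * pairHalf lam (k + 1) + carry lam (k + 2) =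
      lam.rowLen (2 * k + 2) + lam.rowLen (2 * k + 3) + carry lam (k + 1) :=
    two_mul_pairHalf_add_carry lam (k + 1)
  have := lam.rowLen_anti (2 * k) (2 * k + 1) (by omega)
  have := lam.rowLen_anti (2 * k + 1) (2 * k + 2) (by omega)
  have := lam.rowLen_anti (2 * k + 2) (2 * k + 3) (by omega)
  have := carry_le_one lam k
  have := carry_le_one lam (k + 2)
  omega

theorem carryRun_self (k : ℕ) : carryRun lam k k = carry lam k := by
  simp [carryRun]

theorem carryRun_le_carry {k j m : ℕ} (hkj : k ≤ j) (hjm : j ≤ m) :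
    carryRun lam k m ≤ carry lam j := by
  rw [carryRun, ← mul_prod_erase _ _ (mem_Icc.2 ⟨hkj, hjm⟩)]
  exact mul_le_of_le_one_right' (prod_le_one' fun i _ => carry_le_one lam i)

theorem carryRun_le_one (k m : ℕ) : carryRun lam k m ≤ 1 :=
  prod_le_one' fun i _ => carry_le_one lam i

private theorem mul_eq_min_of_le_one {a b : ℕ} (ha : a ≤ 1) (hb : b ≤ 1) : a * b = min a b := by
  interval_cases a <;> interval_cases b <;> rfl

theorem carryRun_succ_right {k m : ℕ} (h : k ≤ m + 1) :
    carryRun lam k (m + 1) = min (carryRun lam k m) (carry lam (m + 1)) := by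
  rw [carryRun, prod_Icc_succ_top h, ← carryRun,
    mul_eq_min_of_le_one (carryRun_le_one lam k m) (carry_le_one lam _)]

theorem carryRun_eq_min_left {k m : ℕ} (h : k ≤ m) :
    carryRun lam k m = min (carry lam k) (carryRun lam (k + 1) m) := by
  rw [carryRun, ← insert_Icc_add_one_left_eq_Icc h, prod_insert (by simp), ← carryRun,
    mul_eq_min_of_le_one (carry_le_one lam _) (carryRun_le_one lam _ m)]

/-- The number of cells in the first `i` rows of `νᵏ`. -/
def chainSum (k i : ℕ) : ℕ :=
  if i ≤ 2 * k then lam.rowLenSum i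
  else halfSum lam k + halfSum lam (i - k) + carryRun lam k (i - k)

theorem chainSum_of_le {k i : ℕ} (h : i ≤ 2 * k) : chainSum lam k i = lam.rowLenSum i :=
  if_pos h

theorem chainSum_eq {k m i : ℕ} (hkm : k ≤ m) (hi : i = k + m) :
    chainSum lam k i = halfSum lam k + halfSum lam m + carryRun lam k m := by
  unfold chainSum
  split_ifs with hik
  · obtain rfl : m = k := by omega
    have := two_mul_halfSum_add_carry lam m
    rw [carryRun_self, hi, ← two_mul]
    omega
  · rw [hi, Nat.add_sub_cancel_left]

theorem chainSum_succ_of_lt {k r : ℕ} (h : r < 2 * k) :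
    chainSum lam k (r + 1) = chainSum lam k r + lam.rowLen r := by
  rw [chainSum_of_le lam h, chainSum_of_le lam h.le, lam.rowLenSum_succ]

theorem chainSum_succ_add_carryRun {k m r : ℕ} (hkm : k ≤ m) (hr : r = k + m) :
    chainSum lam k (r + 1) + carryRun lam k m =
      chainSum lam k r + pairHalf lam m + carryRun lam k (m + 1) := by
  rw [chainSum_eq lam (by omega : k ≤ m + 1) (by omega : r + 1 = k + (m + 1)),
    chainSum_eq lam hkm hr, halfSum_succ]
  ring

theorem carryRun_le_pairHalf_add {k m : ℕ} (h : k ≤ m) :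
    carryRun lam k m ≤ pairHalf lam m + carryRun lam k (m + 1) := by
  have := two_mul_pairHalf_add_carry lam m
  have := carryRun_le_carry lam h le_rfl
  have := carryRun_succ_right lam (by omega : k ≤ m + 1)
  have := carryRun_le_one lam k m
  omega

theorem chainSum_le_succ (k r : ℕ) : chainSum lam k r ≤ chainSum lam k (r + 1) := by
  rcases lt_or_ge r (2 * k) with h | h
  · rw [chainSum_succ_of_lt lam h]
    omega
  · have := chainSum_succ_add_carryRun lam (by omega : k ≤ r - k) (by omega : r = k + (r - k))
    have := carryRun_le_pairHalf_add lam (by omega : k ≤ r - k)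
    omega

def chainRowLen (k r : ℕ) : ℕ := chainSum lam k (r + 1) - chainSum lam k r

theorem sum_chainRowLen (k i : ℕ) : ∑ r ∈ range i, chainRowLen lam k r = chainSum lam k i := by
  simp only [chainRowLen]
  rw [sum_range_tsub (monotone_nat_of_le_succ (chainSum_le_succ lam k)),
    chainSum_of_le lam (Nat.zero_le _)]
  rfl

theorem chainRowLen_of_lt {k r : ℕ} (h : r < 2 * k) : chainRowLen lam k r = lam.rowLen r := by
  rw [chainRowLen, chainSum_succ_of_lt lam h, Nat.add_sub_cancel_left]

theorem chainRowLen_add_carryRun {k m r : ℕ} (hkm : k ≤ m) (hr : r = k + m) :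
    chainRowLen lam k r + carryRun lam k m = pairHalf lam m + carryRun lam k (m + 1) := by
  have := chainSum_succ_add_carryRun lam hkm hr
  have := chainSum_le_succ lam k r
  unfold chainRowLen
  omega

theorem chainRowLen_zero (r : ℕ) : chainRowLen lam 0 r = pairHalf lam r := by
  have := chainRowLen_add_carryRun lam (Nat.zero_le r) (zero_add r).symm
  have := carryRun_le_carry lam (le_refl 0) (Nat.zero_le r)
  have := carryRun_le_carry lam (le_refl 0) (Nat.zero_le (r + 1))
  rw [carry_zero] at *
  omega

theorem chainRowLen_le (k r : ℕ) : chainRowLen lam k r ≤ lam.rowLen r := by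
  rcases lt_or_ge r (2 * k) with h | h
  · exact (chainRowLen_of_lt lam h).le
  · have := chainRowLen_add_carryRun lam (by omega : k ≤ r - k) (by omega : r = k + (r - k))
    have := carryRun_succ_right lam (by omega : k ≤ r - k + 1)
    have := carryRun_le_one lam k (r - k)
    have := pairHalf_le_rowLen lam (r - k)
    have := lam.rowLen_anti r (2 * (r - k)) (by omega)
    omega

theorem chainRowLen_succ_self (r : ℕ) : chainRowLen lam (r + 1) r = lam.rowLen r :=
  chainRowLen_of_lt lam (by omega)

theorem chainRowLen_succ_right_le (k r : ℕ) : chainRowLen lam k (r + 1) ≤ chainRowLen lam k r := by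
  rcases lt_or_ge r (2 * k) with h | h
  · rw [chainRowLen_of_lt lam h]
    exact (chainRowLen_le lam k (r + 1)).trans (lam.rowLen_anti r (r + 1) (by omega))
  · set m := r - k
    -- where the run of odd partial sums from `k` ends at `m`, `μₘ₊₁ < μₘ` pays for the lost cell
    have := chainRowLen_add_carryRun lam (by omega : k ≤ m) (by omega : r = k + m)
    have := chainRowLen_add_carryRun lam (by omega : k ≤ m + 1) (by omega : r + 1 = k + (m + 1))
    have := carryRun_succ_right lam (by omega : k ≤ m + 1)
    have := carryRun_succ_right lam (by omega : k ≤ m + 1 + 1)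
    have := carryRun_le_carry lam (by omega : k ≤ m) le_rfl
    have := carryRun_le_one lam k m
    have := carry_le_one lam m
    have := pairHalf_succ_le lam m
    have := fun h₀ h₁ => pairHalf_succ_lt lam m h₀ h₁
    omega

theorem chainRowLen_le_succ_left (k r : ℕ) : chainRowLen lam k r ≤ chainRowLen lam (k + 1) r := by
  rcases lt_or_ge r (2 * (k + 1)) with h | h
  · rw [chainRowLen_of_lt lam h]
    exact chainRowLen_le lam k r
  · set m := r - (k + 1)
    have := chainRowLen_add_carryRun lam (by omega : k + 1 ≤ m) (by omega : r = k + 1 + m)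
    have := chainRowLen_add_carryRun lam (by omega : k ≤ m + 1) (by omega : r = k + (m + 1))
    have := carryRun_succ_right lam (by omega : k + 1 ≤ m + 1)
    have := carryRun_succ_right lam (by omega : k ≤ m + 1 + 1)
    have := carryRun_eq_min_left lam (by omega : k ≤ m + 1)
    have := carryRun_le_carry lam (by omega : k + 1 ≤ m) le_rfl
    have := carryRun_le_one lam (k + 1) m
    have := carryRun_le_one lam k (m + 1)
    have := carry_le_one lam m
    have := pairHalf_succ_le lam m
    have := fun h₀ h₁ => pairHalf_succ_lt lam m h₀ h₁
    omega

theorem chainRowLen_horizontal_strip (k r : ℕ) :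
    chainRowLen lam (k + 1) (r + 1) ≤ chainRowLen lam k r := by
  rcases lt_or_ge r (2 * k) with h | h
  · rw [chainRowLen_of_lt lam h]
    exact (chainRowLen_le lam _ _).trans (lam.rowLen_anti r (r + 1) (by omega))
  rcases h.eq_or_lt with rfl | h
  · rw [chainRowLen_of_lt lam (by omega : 2 * k + 1 < 2 * (k + 1))]
    have := chainRowLen_add_carryRun lam (le_refl k) (two_mul k)
    have := carryRun_succ_right lam (by omega : k ≤ k + 1)
    have := two_mul_pairHalf_add_carry lam k
    have := lam.rowLen_anti (2 * k) (2 * k + 1) (by omega)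
    have := carry_le_one lam k
    have := carry_le_one lam (k + 1)
    rw [carryRun_self] at *
    omega
  · set m := r - k
    have := chainRowLen_add_carryRun lam (by omega : k + 1 ≤ m) (by omega : r + 1 = k + 1 + m)
    have := chainRowLen_add_carryRun lam (by omega : k ≤ m) (by omega : r = k + m)
    have := carryRun_succ_right lam (by omega : k + 1 ≤ m + 1)
    have := carryRun_eq_min_left lam (by omega : k ≤ m)
    have := carryRun_eq_min_left lam (by omega : k ≤ m + 1)
    have := carryRun_le_one lam (k + 1) m
    have := carry_le_one lam k
    omega

theorem chainSum_le_rowLenSum (k i : ℕ) : chainSum lam k i ≤ lam.rowLenSum i := by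
  rw [← sum_chainRowLen]
  exact sum_le_sum fun r _ => chainRowLen_le lam k r

theorem chainSum_colLen (h : Even lam.card) (k : ℕ) :
    chainSum lam k (lam.colLen 0) = halfSum lam k + lam.card / 2 := by
  have hhalf {j : ℕ} (hj : lam.colLen 0 ≤ 2 * j) :
      halfSum lam j = lam.card / 2 ∧ carry lam j = 0 := by
    have := Nat.even_iff.1 h
    unfold halfSum carry
    rw [lam.rowLenSum_of_colLen_le hj]
    omega
  rcases le_or_gt (lam.colLen 0) (2 * k) with hk | hk
  · rw [chainSum_of_le lam hk, lam.rowLenSum_of_colLen_le le_rfl, (hhalf hk).1]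
    have := Nat.even_iff.1 h
    omega
  · set m := lam.colLen 0 - k
    rw [chainSum_eq lam (by omega : k ≤ m) (by omega), (hhalf (by omega : lam.colLen 0 ≤ 2 * m)).1]
    have := (hhalf (by omega : lam.colLen 0 ≤ 2 * m)).2
    have := carryRun_le_carry lam (by omega : k ≤ m) le_rfl
    omega

theorem pairHalf_succ_add_carryRun_le {k m : ℕ} (h : k + 2 ≤ m) :
    pairHalf lam (k + 1) + carryRun lam (k + 2) m + carryRun lam k (m + 1) ≤
      pairHalf lam k + carryRun lam (k + 1) (m + 1) + carryRun lam (k + 1) m := by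
  have := carryRun_eq_min_left lam (by omega : k ≤ m + 1)
  have : carryRun lam (k + 1) m = min (carry lam (k + 1)) (carryRun lam (k + 2) m) :=
    carryRun_eq_min_left lam (by omega)
  have := carryRun_le_carry lam (le_refl (k + 2)) h
  have := carryRun_le_carry lam (le_refl (k + 1)) (by omega : k + 1 ≤ m + 1)
  have := carryRun_le_one lam (k + 2) m
  have := carryRun_le_one lam (k + 1) (m + 1)
  have := carry_le_one lam k
  have := carry_le_one lam (k + 1)
  have := carry_le_one lam (k + 2)
  have := pairHalf_succ_le lam k
  have := fun h₀ h₁ => pairHalf_succ_lt lam k h₀ h₁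
  omega

theorem chainSum_ballot (k i : ℕ) :
    chainSum lam (k + 2) (i + 1) + chainSum lam k i ≤
      chainSum lam (k + 1) (i + 1) + chainSum lam (k + 1) i := by
  rcases le_or_gt i (2 * k + 1) with hi | hi
  · rw [chainSum_of_le lam (by omega : i + 1 ≤ 2 * (k + 2)),
      chainSum_of_le lam (by omega : i + 1 ≤ 2 * (k + 1)),
      chainSum_of_le lam (by omega : i ≤ 2 * (k + 1))]
    have := chainSum_le_rowLenSum lam k i
    omega
  obtain rfl | hi := (show 2 * k + 2 ≤ i from hi).eq_or_lt
  · rw [chainSum_of_le lam (by omega : 2 * k + 2 + 1 ≤ 2 * (k + 2)),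
      chainSum_of_le lam (by omega : 2 * k + 2 ≤ 2 * (k + 1)),
      chainSum_eq lam (by omega : k + 1 ≤ k + 2) (by omega : 2 * k + 2 + 1 = k + 1 + (k + 2)),
      chainSum_eq lam (by omega : k ≤ k + 2) (by omega : 2 * k + 2 = k + (k + 2)),
      lam.rowLenSum_succ]
    have : 2 * halfSum lam (k + 1) + carry lam (k + 1) = lam.rowLenSum (2 * k + 2) :=
      two_mul_halfSum_add_carry lam (k + 1)
    have := halfSum_succ lam k
    have := two_mul_pairHalf_add_carry lam k
    have := lam.rowLen_anti (2 * k) (2 * k + 1) (by omega)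
    have := lam.rowLen_anti (2 * k + 1) (2 * k + 2) (by omega)
    have := carry_le_one lam k
    have := carry_le_one lam (k + 1)
    have := carryRun_eq_min_left lam (by omega : k ≤ k + 2)
    omega
  · set m := i - (k + 1)
    rw [chainSum_eq lam (by omega : k + 2 ≤ m) (by omega : i + 1 = k + 2 + m),
      chainSum_eq lam (by omega : k + 1 ≤ m + 1) (by omega : i + 1 = k + 1 + (m + 1)),
      chainSum_eq lam (by omega : k + 1 ≤ m) (by omega : i = k + 1 + m),
      chainSum_eq lam (by omega : k ≤ m + 1) (by omega : i = k + (m + 1))]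
    have := halfSum_succ lam k
    have : halfSum lam (k + 2) = halfSum lam (k + 1) + pairHalf lam (k + 1) :=
      halfSum_succ lam (k + 1)
    have := pairHalf_succ_add_carryRun_le lam (by omega : k + 2 ≤ m)
    omega

def halfDiagram : YoungDiagram :=
  lam.truncRows (pairHalf lam) (antitone_nat_of_succ_le (pairHalf_succ_le lam))

theorem halfDiagram_rowLen (r : ℕ) : (halfDiagram lam).rowLen r = pairHalf lam r :=
  YoungDiagram.rowLen_truncRows
    (fun r => (pairHalf_le_rowLen lam r).trans (lam.rowLen_anti r (2 * r) (by omega))) r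

def lrChain (h : Even lam.card) : LRChain (halfDiagram lam) (halfDiagram lam) lam where
  rowLen := chainRowLen lam
  rowLen_zero r := (chainRowLen_zero lam r).trans (halfDiagram_rowLen lam r).symm
  rowLen_le := chainRowLen_le lam
  rowLen_succ_self := chainRowLen_succ_self lam
  rowLen_succ_right_le := chainRowLen_succ_right_le lam
  rowLen_le_succ_left := chainRowLen_le_succ_left lam
  horizontal_strip := chainRowLen_horizontal_strip lam
  strip_card k := by
    rw [sum_tsub_distrib _ fun r _ => chainRowLen_le_succ_left lam k r, sum_chainRowLen,
      sum_chainRowLen, chainSum_colLen lam h, chainSum_colLen lam h, halfSum_succ,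
      halfDiagram_rowLen]
    omega
  ballot k i := by
    rw [sum_tsub_distrib _ fun r _ => chainRowLen_le_succ_left lam (k + 1) r,
      sum_tsub_distrib _ fun r _ => chainRowLen_le_succ_left lam k r]
    simp only [sum_chainRowLen]
    change chainSum lam (k + 2) (i + 1) - _ ≤ _
    have := chainSum_ballot lam k i
    omega

end PairHalving

/-- For every partition `lam` of even size there is a partition `μ` with
`c^lam_{μ,μ} > 0`. -/
theorem exists_lr_self_of_even (lam : YoungDiagram) (h : Even lam.card) :
    ∃ μ : YoungDiagram, 0 < lrCoeff μ μ lam :=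
  ⟨PairHalving.halfDiagram lam, lrCoeff_pos_of_lrChain (PairHalving.lrChain lam h)⟩
end
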